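/- arXiv:1711.02939 — 12 statements merged into one kernel-verified Lean document; each statement's English description precedes it below -/
import Mathlib

section
/- Suppose β¹ ≥ 1, and set π* = min(β¹, π̄). Then (π*; μ̲, σ̄²) is a saddle point of g, i.e. g(x_π; μ̲, σ̄²) ≤ g(π*; μ̲, σ̄²) ≤ g(π*; x_μ, x_σ) for all x_π ∈ [π̲, π̄] and all (x_μ, x_σ) ∈ B. -/
/-!
With `a = (1 - p) σ̄²`, the function `g(·; μ̲, σ̄²)` is, on `[1, ∞)`, the concave parabola
`-(a/2) x² + (μ̲ - R) x + R` with vertex `β¹`, so on `[1, π̄]` it is maximal at the point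
`min β¹ π̄` closest to the vertex. On `(-∞, 1]` it is the parabola `-(a/2) x² + (μ̲ - r) x + r`,
whose vertex `(μ̲ - r)/a ≥ β¹ ≥ 1` lies to the right, so there it is maximal at `1`.
Since `min β¹ π̄ ≥ 0`, moving `(x_μ, x_σ)` away from `(μ̲, σ̄²)` inside `B` can only increase `g`.
-/

lemma quadratic_le_of_abs_sub_le {a v x y : ℝ} (ha : 0 ≤ a) (h : |y - v| ≤ |x - v|) :
    -(a / 2) * x ^ 2 + a * v * x ≤ -(a / 2) * y ^ 2 + a * v * y := by
  have hsq : (y - v) ^ 2 ≤ (x - v) ^ 2 := sq_le_sq.mpr h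
  nlinarith [mul_le_mul_of_nonneg_left hsq ha]

lemma abs_min_sub_le_abs_sub {v c x : ℝ} (hx : x ≤ c) : |min v c - v| ≤ |x - v| := by
  rcases le_total v c with hvc | hcv
  · simp [min_eq_left hvc]
  · rw [min_eq_right hcv, abs_of_nonpos (by linarith), abs_of_nonpos (by linarith)]
    linarith

noncomputable def gainRate (p r R xπ xμ xσ : ℝ) : ℝ :=
  (p - 1) / 2 * xσ * xπ ^ 2 + xμ * xπ + r * max (1 - xπ) 0 - R * max (xπ - 1) 0

namespace gainRate

variable {p r R x y c μ s : ℝ}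

lemma eq_of_one_le (hx : 1 ≤ x) :
    gainRate p r R x μ s = -((1 - p) * s / 2) * x ^ 2 + (μ - R) * x + R := by
  rw [gainRate, max_eq_right (by linarith), max_eq_left (by linarith)]
  ring

lemma eq_of_le_one (hx : x ≤ 1) :
    gainRate p r R x μ s = -((1 - p) * s / 2) * x ^ 2 + (μ - r) * x + r := by
  rw [gainRate, max_eq_left (by linarith), max_eq_right (by linarith)]
  ring

lemma le_of_abs_sub_le (ha : 0 < (1 - p) * s) (hx : 1 ≤ x) (hy : 1 ≤ y)
    (h : |y - (μ - R) / ((1 - p) * s)| ≤ |x - (μ - R) / ((1 - p) * s)|) :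
    gainRate p r R x μ s ≤ gainRate p r R y μ s := by
  have hquad := quadratic_le_of_abs_sub_le ha.le h
  rw [mul_div_cancel₀ _ ha.ne'] at hquad
  rw [eq_of_one_le hx, eq_of_one_le hy]
  linear_combination hquad

lemma le_at_one (ha : 0 < (1 - p) * s) (hrR : r ≤ R)
    (hβ : 1 ≤ (μ - R) / ((1 - p) * s)) (hx : x ≤ 1) :
    gainRate p r R x μ s ≤ gainRate p r R 1 μ s := by
  set v := (μ - r) / ((1 - p) * s)
  have hv : 1 ≤ v := hβ.trans (div_le_div_of_nonneg_right (by linarith) ha.le)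
  have hquad := quadratic_le_of_abs_sub_le ha.le (abs_min_sub_le_abs_sub (v := v) hx)
  rw [min_eq_right hv, mul_div_cancel₀ _ ha.ne'] at hquad
  rw [eq_of_le_one hx, eq_of_le_one le_rfl]
  linear_combination hquad

lemma le_at_min (ha : 0 < (1 - p) * s) (hrR : r ≤ R)
    (hβ : 1 ≤ (μ - R) / ((1 - p) * s)) (hc : 1 ≤ c) (hx : x ≤ c) :
    gainRate p r R x μ s ≤ gainRate p r R (min ((μ - R) / ((1 - p) * s)) c) μ s := by
  have hmin : 1 ≤ min ((μ - R) / ((1 - p) * s)) c := le_min hβ hc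
  rcases le_total x 1 with hx1 | hx1
  · calc gainRate p r R x μ s ≤ gainRate p r R 1 μ s := le_at_one ha hrR hβ hx1
      _ ≤ _ := le_of_abs_sub_le ha le_rfl hmin (abs_min_sub_le_abs_sub hc)
  · exact le_of_abs_sub_le ha hx1 hmin (abs_min_sub_le_abs_sub hx)

lemma le_of_le_of_le {μ' s' : ℝ} (hp : p ≤ 1) (hx : 0 ≤ x) (hμ : μ ≤ μ') (hs : s' ≤ s) :
    gainRate p r R x μ s ≤ gainRate p r R x μ' s' := by
  have hσ := mul_nonneg (mul_nonneg (sub_nonneg.2 hp) (sub_nonneg.2 hs)) (sq_nonneg x)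
  have hμx := mul_nonneg (sub_nonneg.2 hμ) hx
  unfold gainRate
  linear_combination hσ / 2 + hμx

end gainRate

theorem saddle_point_borrow_to_buy_general
    (p r R : ℝ) (hp : p < 1) (hrR : r ≤ R)
    (πlo πhi : ℝ) (hπhi : 1 ≤ πhi)
    (μlo μhi σlo σhi : ℝ) (hσhi : 0 < σhi)
    (g : ℝ → ℝ → ℝ → ℝ)
    (hg : ∀ xπ xμ xσ, g xπ xμ xσ =
      (p - 1) / 2 * xσ * xπ ^ 2 + xμ * xπ + r * max (1 - xπ) 0 - R * max (xπ - 1) 0)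
    (β1 : ℝ) (hβ1 : β1 = (μlo - R) / ((1 - p) * σhi ^ 2))
    (hcase : 1 ≤ β1) :
    (∀ xπ ∈ Set.Icc πlo πhi, g xπ μlo (σhi ^ 2) ≤ g (min β1 πhi) μlo (σhi ^ 2)) ∧
    (∀ xμ ∈ Set.Icc μlo μhi, ∀ xσ ∈ Set.Icc (σlo ^ 2) (σhi ^ 2),
      g (min β1 πhi) μlo (σhi ^ 2) ≤ g (min β1 πhi) xμ xσ) := by
  obtain rfl : g = gainRate p r R := by
    funext xπ xμ xσ
    exact hg xπ xμ xσ
  subst hβ1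
  have ha : 0 < (1 - p) * σhi ^ 2 := mul_pos (sub_pos.2 hp) (by positivity)
  have hmin : 0 ≤ min ((μlo - R) / ((1 - p) * σhi ^ 2)) πhi :=
    zero_le_one.trans (le_min hcase hπhi)
  exact ⟨fun xπ hxπ => gainRate.le_at_min ha hrR hcase hπhi hxπ.2,
    fun xμ hxμ xσ hxσ => gainRate.le_of_le_of_le hp.le hmin hxμ.1 hxσ.2⟩

/-- Borrow-to-buy regime: if `β¹ ≥ 1` then `(min β¹ π̄; μ̲, σ̄²)` is a saddle point of `g`. -/
theorem saddle_point_borrow_to_buy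
    (p r R : ℝ) (hp : p < 1) (hrR : r ≤ R)
    (πlo πhi : ℝ) (hπlo : πlo ≤ 0) (hπhi : 1 ≤ πhi)
    (μlo μhi σlo σhi : ℝ) (hμ : μlo ≤ μhi)
    (hσlo : 0 ≤ σlo) (hσ : σlo ≤ σhi) (hσhi : 0 < σhi)
    (g : ℝ → ℝ → ℝ → ℝ)
    (hg : ∀ xπ xμ xσ, g xπ xμ xσ =
      (p - 1) / 2 * xσ * xπ ^ 2 + xμ * xπ + r * max (1 - xπ) 0 - R * max (xπ - 1) 0)
    (β1 : ℝ) (hβ1 : β1 = (μlo - R) / ((1 - p) * σhi ^ 2))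
    (hcase : 1 ≤ β1) :
    (∀ xπ ∈ Set.Icc πlo πhi, g xπ μlo (σhi ^ 2) ≤ g (min β1 πhi) μlo (σhi ^ 2)) ∧
    (∀ xμ ∈ Set.Icc μlo μhi, ∀ xσ ∈ Set.Icc (σlo ^ 2) (σhi ^ 2),
      g (min β1 πhi) μlo (σhi ^ 2) ≤ g (min β1 πhi) xμ xσ) :=
  saddle_point_borrow_to_buy_general p r R hp hrR πlo πhi hπhi μlo μhi σlo σhi hσhi g hg β1 hβ1
    hcase
end

section
/- Suppose β¹ ≤ 1 ≤ β². Then (1; μ̲, σ̄²) is a saddle point of g, i.e. g(x_π; μ̲, σ̄²) ≤ g(1; μ̲, σ̄²) ≤ g(1; x_μ, x_σ) for all x_π ∈ [π̲, π̄] and all (x_μ, x_σ) ∈ B. -/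
/-- Full-position regime: if `β¹ ≤ 1 ≤ β²` then `(1; μ̲, σ̄²)` is a saddle point of `g`. -/
theorem saddle_point_full_position
    (p r R : ℝ) (hp : p < 1) (hrR : r ≤ R)
    (πlo πhi : ℝ) (hπlo : πlo ≤ 0) (hπhi : 1 ≤ πhi)
    (μlo μhi σlo σhi : ℝ) (hμ : μlo ≤ μhi)
    (hσlo : 0 ≤ σlo) (hσ : σlo ≤ σhi) (hσhi : 0 < σhi)
    (g : ℝ → ℝ → ℝ → ℝ)
    (hg : ∀ xπ xμ xσ, g xπ xμ xσ =
      (p - 1) / 2 * xσ * xπ ^ 2 + xμ * xπ + r * max (1 - xπ) 0 - R * max (xπ - 1) 0)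
    (β1 β2 : ℝ) (hβ1 : β1 = (μlo - R) / ((1 - p) * σhi ^ 2))
    (hβ2 : β2 = (μlo - r) / ((1 - p) * σhi ^ 2))
    (hcase1 : β1 ≤ 1) (hcase2 : 1 ≤ β2) :
    (∀ xπ ∈ Set.Icc πlo πhi, g xπ μlo (σhi ^ 2) ≤ g 1 μlo (σhi ^ 2)) ∧
    (∀ xμ ∈ Set.Icc μlo μhi, ∀ xσ ∈ Set.Icc (σlo ^ 2) (σhi ^ 2),
      g 1 μlo (σhi ^ 2) ≤ g 1 xμ xσ) := by

  have ha : 0 < (1 - p) * σhi ^ 2 := mul_pos (by linarith) (by positivity)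
  have h1 : μlo - R ≤ (1 - p) * σhi ^ 2 := by
    rw [hβ1, div_le_one ha] at hcase1; linarith
  have h2 : (1 - p) * σhi ^ 2 ≤ μlo - r := by
    rw [hβ2, le_div_iff₀ ha] at hcase2; linarith
  constructor
  · intro xπ hx
    rw [hg, hg]
    rcases le_or_gt xπ 1 with h | h
    · rw [max_eq_left (by linarith), max_eq_right (by linarith) ]
      norm_num
      nlinarith [sq_nonneg (1 - xπ)]
    · rw [max_eq_right (by linarith), max_eq_left (by linarith)]
      norm_num
      nlinarith [sq_nonneg (1 - xπ)]
  · intro xμ hxμ xσ hxσ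
    rw [hg, hg]
    norm_num
    have := hxμ.1
    have := hxσ.2
    nlinarith
end

section
/- Suppose β³ ≤ 0, and set π* = max(β³, π̲). Then (π*; μ̄, σ̄²) is a saddle point of g, i.e. g(x_π; μ̄, σ̄²) ≤ g(π*; μ̄, σ̄²) ≤ g(π*; x_μ, x_σ) for all x_π ∈ [π̲, π̄] and all (x_μ, x_σ) ∈ B. -/
set_option maxHeartbeats 1000000


/-- Shortsale regime: if `β³ ≤ 0` then `(max β³ π̲; μ̄, σ̄²)` is a saddle point of `g`. -/
theorem saddle_point_shortsale
    (p r R : ℝ) (hp : p < 1) (hrR : r ≤ R)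
    (πlo πhi : ℝ) (hπlo : πlo ≤ 0) (hπhi : 1 ≤ πhi)
    (μlo μhi σlo σhi : ℝ) (hμ : μlo ≤ μhi)
    (hσlo : 0 ≤ σlo) (hσ : σlo ≤ σhi) (hσhi : 0 < σhi)
    (g : ℝ → ℝ → ℝ → ℝ)
    (hg : ∀ xπ xμ xσ, g xπ xμ xσ =
      (p - 1) / 2 * xσ * xπ ^ 2 + xμ * xπ + r * max (1 - xπ) 0 - R * max (xπ - 1) 0)
    (β3 : ℝ) (hβ3 : β3 = (μhi - r) / ((1 - p) * σhi ^ 2))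
    (hcase : β3 ≤ 0) :
    (∀ xπ ∈ Set.Icc πlo πhi, g xπ μhi (σhi ^ 2) ≤ g (max β3 πlo) μhi (σhi ^ 2)) ∧
    (∀ xμ ∈ Set.Icc μlo μhi, ∀ xσ ∈ Set.Icc (σlo ^ 2) (σhi ^ 2),
      g (max β3 πlo) μhi (σhi ^ 2) ≤ g (max β3 πlo) xμ xσ) := by
  obtain ⟨m, hmdef⟩ : ∃ m, m = max β3 πlo := ⟨_, rfl⟩
  rw [← hmdef]
  have hm0 : m ≤ 0 := hmdef ▸ max_le hcase hπlo
  have hmβ : β3 ≤ m := hmdef ▸ le_max_left _ _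
  have hmπ : πlo ≤ m := hmdef ▸ le_max_right _ _
  have h1p : (0:ℝ) < 1 - p := by linarith
  have hσ2 : (0:ℝ) < σhi ^ 2 := by positivity
  have hμr : μhi - r = (1 - p) * σhi ^ 2 * β3 := by
    rw [hβ3]; field_simp
  have hβm : (1 - p) * σhi ^ 2 * β3 ≤ 0 :=
    mul_nonpos_of_nonneg_of_nonpos (by positivity) hcase
  have hmax1 : max (1 - m) 0 = 1 - m := max_eq_left (by linarith)
  have hmax2 : max (m - 1) 0 = 0 := max_eq_right (by linarith)
  constructor
  · rintro xπ ⟨hx1, hx2⟩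
    rw [hg, hg, hmax1, hmax2]
    rcases le_total xπ 1 with hxle | hxgt
    · rw [max_eq_left (by linarith), max_eq_right (by linarith)]
      rcases le_total β3 πlo with hb | hb
      · have hme : m = πlo := by rw [hmdef]; exact max_eq_right hb
        rw [hme]
        nlinarith [mul_nonneg (mul_nonneg (mul_nonneg h1p.le hσ2.le)
            (sub_nonneg.2 hx1)) (sub_nonneg.2 hb), sq_nonneg (xπ - πlo),
          mul_pos h1p hσ2]
      · have hme : m = β3 := by rw [hmdef]; exact max_eq_left hb
        rw [hme]
        nlinarith [sq_nonneg (xπ - β3), mul_pos h1p hσ2]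
    · rw [max_eq_right (by linarith), max_eq_left (by linarith)]
      have h1 : (p - 1) / 2 * σhi ^ 2 * xπ ^ 2 + μhi * xπ + r * 0 - R * (xπ - 1) ≤
          (p - 1) / 2 * σhi ^ 2 * 1 ^ 2 + μhi * 1 + r * (1 - 1) - R * 0 := by
        nlinarith [mul_nonneg (sub_nonneg.2 hxgt) (sub_nonneg.2 hrR), sq_nonneg (xπ - 1),
          mul_pos h1p hσ2, mul_nonneg (sub_nonneg.2 hxgt) (neg_nonneg.2 hβm),
          mul_nonneg (mul_nonneg h1p.le hσ2.le)
            (mul_nonneg (sub_nonneg.2 hxgt) (sub_nonneg.2 hxgt))]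
      have h2 : (p - 1) / 2 * σhi ^ 2 * 1 ^ 2 + μhi * 1 + r * (1 - 1) - R * 0 ≤
          (p - 1) / 2 * σhi ^ 2 * m ^ 2 + μhi * m + r * (1 - m) - R * 0 := by
        rcases le_total β3 πlo with hb | hb
        · have hme : m = πlo := by rw [hmdef]; exact max_eq_right hb
          rw [hme]
          nlinarith [mul_nonneg (mul_nonneg (mul_nonneg h1p.le hσ2.le)
              (sub_nonneg.2 (by linarith : πlo ≤ (1:ℝ)))) (sub_nonneg.2 hb),
            sq_nonneg (1 - πlo), mul_pos h1p hσ2]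
        · have hme : m = β3 := by rw [hmdef]; exact max_eq_left hb
          rw [hme]
          nlinarith [sq_nonneg (1 - β3), mul_pos h1p hσ2]
      linarith
  · rintro xμ ⟨_, hμ2⟩ xσ ⟨hσ1, hσ2'⟩
    rw [hg, hg, hmax1, hmax2]
    have h1 : (p - 1) / 2 * σhi ^ 2 * m ^ 2 ≤ (p - 1) / 2 * xσ * m ^ 2 := by
      nlinarith [mul_nonneg (sub_nonneg.2 hσ2') (sq_nonneg m)]
    have h2 : μhi * m ≤ xμ * m := by nlinarith
    linarith
end

section
/- The max-min value of g over the constraint set equals the constant K given by the following piecewise formula: max over x_π ∈ [π̲, π̄] of (min over (x_μ, x_σ) ∈ B of g(x_π; x_μ, x_σ)) = K, where K = R + π̄(μ̲ − R) − ((1−p)/2)σ̄²π̄² if β¹ ≥ π̄; K = R + (μ̲ − R)²/(2(1−p)σ̄²) if 1 ≤ β¹ ≤ π̄; K = μ̲ − ((1−p)/2)σ̄² if β¹ ≤ 1 ≤ β²; K = r + (μ̲ − r)²/(2(1−p)σ̄²) if 0 ≤ β² ≤ 1; K = r if β² ≤ 0 ≤ β³; K = r + (μ̄ − r)²/(2(1−p)σ̄²)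 if π̲ ≤ β³ ≤ 0; K = r + π̲(μ̄ − r) − ((1−p)/2)σ̄²π̲² if β³ ≤ π̲. -/
set_option maxHeartbeats 2000000

noncomputable def mmH (p r R μlo μhi σhi x : ℝ) : ℝ :=
  (p - 1) / 2 * σhi ^ 2 * x ^ 2 + min (μlo * x) (μhi * x) + r * max (1 - x) 0 - R * max (x - 1) 0

/-- The max-min value of `g` over `[π̲, π̄] × B` equals the constant `K`. -/
theorem maxmin_value_eq_K
    (p r R : ℝ) (hp : p < 1) (hrR : r ≤ R)
    (πlo πhi : ℝ) (hπlo : πlo ≤ 0) (hπhi : 1 ≤ πhi)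
    (μlo μhi σlo σhi : ℝ) (hμ : μlo ≤ μhi)
    (hσlo : 0 ≤ σlo) (hσ : σlo ≤ σhi) (hσhi : 0 < σhi)
    (g : ℝ → ℝ → ℝ → ℝ)
    (hg : ∀ xπ xμ xσ, g xπ xμ xσ =
      (p - 1) / 2 * xσ * xπ ^ 2 + xμ * xπ + r * max (1 - xπ) 0 - R * max (xπ - 1) 0)
    (β1 β2 β3 : ℝ)
    (hβ1 : β1 = (μlo - R) / ((1 - p) * σhi ^ 2))
    (hβ2 : β2 = (μlo - r) / ((1 - p) * σhi ^ 2))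
    (hβ3 : β3 = (μhi - r) / ((1 - p) * σhi ^ 2))
    (K : ℝ)
    (hK : K =
      if πhi ≤ β1 then R + πhi * (μlo - R) - (1 - p) / 2 * σhi ^ 2 * πhi ^ 2
      else if 1 ≤ β1 then R + (μlo - R) ^ 2 / (2 * (1 - p) * σhi ^ 2)
      else if 1 ≤ β2 then μlo - (1 - p) / 2 * σhi ^ 2
      else if 0 ≤ β2 then r + (μlo - r) ^ 2 / (2 * (1 - p) * σhi ^ 2)
      else if 0 ≤ β3 then r
      else if πlo ≤ β3 then r + (μhi - r) ^ 2 / (2 * (1 - p) * σhi ^ 2)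
      else r + πlo * (μhi - r) - (1 - p) / 2 * σhi ^ 2 * πlo ^ 2) :
    sSup ((fun xπ =>
      sInf ((fun xμσ : ℝ × ℝ => g xπ xμσ.1 xμσ.2) ''
        (Set.Icc μlo μhi ×ˢ Set.Icc (σlo ^ 2) (σhi ^ 2)))) '' Set.Icc πlo πhi) = K := by
  have hp1 : (1:ℝ) - p ≠ 0 := ne_of_gt (by linarith)
  have hσ0 : σhi ≠ 0 := ne_of_gt hσhi
  set A := (1 - p) / 2 * σhi ^ 2 with hA
  have hA0 : 0 < A := by
    rw [hA]
    have : (0:ℝ) < (1 - p) / 2 := by linarith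
    positivity
  have h1 : μlo - R = 2 * A * β1 := by
    rw [hβ1, hA]; field_simp
  have h2 : μlo - r = 2 * A * β2 := by
    rw [hβ2, hA]; field_simp
  have h3 : μhi - r = 2 * A * β3 := by
    rw [hβ3, hA]; field_simp
  have hb12 : β1 ≤ β2 := by nlinarith
  have hb23 : β2 ≤ β3 := by nlinarith
  have hj : R - r = 2 * A * β2 - 2 * A * β1 := by linarith
  -- piecewise formulas for mmH
  have E3 : ∀ x : ℝ, x ≤ 0 → mmH p r R μlo μhi σhi x = r + 2*A*β3*x - A*x^2 := by
    intro x hx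
    unfold mmH
    rw [min_eq_right (by nlinarith), max_eq_left (by linarith), max_eq_right (by linarith)]
    linear_combination x * h3 + x^2 * hA
  have E2 : ∀ x : ℝ, 0 ≤ x → x ≤ 1 → mmH p r R μlo μhi σhi x = r + 2*A*β2*x - A*x^2 := by
    intro x hx0 hx1
    unfold mmH
    rw [min_eq_left (mul_le_mul_of_nonneg_right hμ hx0), max_eq_left (by linarith),
      max_eq_right (by linarith)]
    linear_combination x * h2 + x^2 * hA
  have E1 : ∀ x : ℝ, 1 ≤ x → mmH p r R μlo μhi σhi x = R + 2*A*β1*x - A*x^2 := by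
    intro x hx
    unfold mmH
    rw [min_eq_left (mul_le_mul_of_nonneg_right hμ (by linarith)), max_eq_right (by linarith),
      max_eq_left (by linarith)]
    linear_combination x * h1 + x^2 * hA
  -- the inner infimum equals mmH
  have inner : ∀ x : ℝ, sInf ((fun xμσ : ℝ × ℝ => g x xμσ.1 xμσ.2) ''
      (Set.Icc μlo μhi ×ˢ Set.Icc (σlo ^ 2) (σhi ^ 2))) = mmH p r R μlo μhi σhi x := by
    intro x
    have hσσ : σlo ^ 2 ≤ σhi ^ 2 := by nlinarith
    apply IsLeast.csInf_eq
    constructor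
    · rcases le_total 0 x with h0 | h0
      · refine ⟨(μlo, σhi ^ 2), Set.mem_prod.mpr ⟨Set.mem_Icc.mpr ⟨le_refl _, hμ⟩,
          Set.mem_Icc.mpr ⟨hσσ, le_refl _⟩⟩, ?_⟩
        simp only [hg]
        unfold mmH
        rw [min_eq_left (mul_le_mul_of_nonneg_right hμ h0)]
      · refine ⟨(μhi, σhi ^ 2), Set.mem_prod.mpr ⟨Set.mem_Icc.mpr ⟨hμ, le_refl _⟩,
          Set.mem_Icc.mpr ⟨hσσ, le_refl _⟩⟩, ?_⟩
        simp only [hg]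
        unfold mmH
        rw [min_eq_right (by nlinarith)]
    · rintro y ⟨⟨xμ, xσ⟩, hmem, rfl⟩
      obtain ⟨hμm, hσm⟩ := Set.mem_prod.mp hmem
      rw [Set.mem_Icc] at hμm hσm
      simp only [hg]
      have t1 : (p - 1) / 2 * σhi ^ 2 * x ^ 2 ≤ (p - 1) / 2 * xσ * x ^ 2 := by
        nlinarith [mul_nonneg (sub_nonneg.2 hσm.2) (sq_nonneg x), hp]
      have t2 : min (μlo * x) (μhi * x) ≤ xμ * x := by
        rcases le_total 0 x with hx | hx
        · exact le_trans (min_le_left _ _) (mul_le_mul_of_nonneg_right hμm.1 hx)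
        · exact le_trans (min_le_right _ _) (by nlinarith [hμm.2])
      unfold mmH
      linarith
  have himg : ((fun xπ => sInf ((fun xμσ : ℝ × ℝ => g xπ xμσ.1 xμσ.2) ''
      (Set.Icc μlo μhi ×ˢ Set.Icc (σlo ^ 2) (σhi ^ 2)))) '' Set.Icc πlo πhi)
      = mmH p r R μlo μhi σhi '' Set.Icc πlo πhi :=
    Set.image_congr fun x _ => inner x
  rw [himg]
  -- vertex-value identities
  have hv1 : (μlo - R) ^ 2 / (2 * (1 - p) * σhi ^ 2) = A * β1 ^ 2 := by
    rw [hβ1, hA]; field_simp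
  have hv2 : (μlo - r) ^ 2 / (2 * (1 - p) * σhi ^ 2) = A * β2 ^ 2 := by
    rw [hβ2, hA]; field_simp
  have hv3 : (μhi - r) ^ 2 / (2 * (1 - p) * σhi ^ 2) = A * β3 ^ 2 := by
    rw [hβ3, hA]; field_simp
  -- monotonicity lemmas
  have INC : ∀ x y : ℝ, x ≤ y → y ≤ β3 → (0 < y → y ≤ β2) → (1 < y → y ≤ β1) →
      mmH p r R μlo μhi σhi x ≤ mmH p r R μlo μhi σhi y := by
    clear hg inner himg hv1 hv2 hv3 hK hβ1 hβ2 hβ3 h1 h2 h3 hp1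
    intro x y hxy hy3 hy2 hy1
    rcases le_or_gt y 0 with hy0 | hy0
    · rw [E3 x (by linarith), E3 y hy0]
      nlinarith [mul_nonneg hA0.le (mul_nonneg (sub_nonneg.2 hxy)
        (show (0:ℝ) ≤ 2*β3 - x - y by linarith))]
    · have hyb2 := hy2 hy0
      rcases le_or_gt y 1 with hy1' | hy1''
      · rw [E2 y hy0.le hy1']
        rcases le_or_gt x 0 with hx0 | hx0
        · rw [E3 x hx0]
          nlinarith [mul_nonneg hA0.le (mul_nonneg (show (0:ℝ) ≤ -x by linarith)
              (show (0:ℝ) ≤ 2*β3 - x by linarith)),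
            mul_nonneg hA0.le (mul_nonneg hy0.le (show (0:ℝ) ≤ 2*β2 - y by linarith))]
        · rw [E2 x hx0.le (by linarith)]
          nlinarith [mul_nonneg hA0.le (mul_nonneg (sub_nonneg.2 hxy)
            (show (0:ℝ) ≤ 2*β2 - x - y by linarith))]
      · have hyb1 := hy1 hy1''
        rw [E1 y hy1''.le]
        rcases le_or_gt x 0 with hx0 | hx0
        · rw [E3 x hx0]
          nlinarith [mul_nonneg hA0.le (mul_nonneg (show (0:ℝ) ≤ -x by linarith)
              (show (0:ℝ) ≤ 2*β3 - x by linarith)),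
            mul_nonneg hA0.le (show (0:ℝ) ≤ 2*β2 - 1 by linarith),
            mul_nonneg hA0.le (mul_nonneg (show (0:ℝ) ≤ y - 1 by linarith)
              (show (0:ℝ) ≤ 2*β1 - 1 - y by linarith)), hj]
        · rcases le_or_gt x 1 with hx1 | hx1
          · rw [E2 x hx0.le hx1]
            nlinarith [mul_nonneg hA0.le (mul_nonneg (show (0:ℝ) ≤ 1 - x by linarith)
                (show (0:ℝ) ≤ 2*β2 - x - 1 by linarith)),
              mul_nonneg hA0.le (mul_nonneg (show (0:ℝ) ≤ y - 1 by linarith)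
                (show (0:ℝ) ≤ 2*β1 - 1 - y by linarith)), hj]
          · rw [E1 x hx1.le]
            nlinarith [mul_nonneg hA0.le (mul_nonneg (sub_nonneg.2 hxy)
              (show (0:ℝ) ≤ 2*β1 - x - y by linarith))]
  have DEC : ∀ x y : ℝ, y ≤ x → β1 ≤ y → (y < 1 → β2 ≤ y) → (y < 0 → β3 ≤ y) →
      mmH p r R μlo μhi σhi x ≤ mmH p r R μlo μhi σhi y := by
    clear INC hg inner himg hv1 hv2 hv3 hK hβ1 hβ2 hβ3 h1 h2 h3 hp1
    intro x y hxy hy1 hy2 hy3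
    rcases le_or_gt 1 y with hy1' | hy1''
    · rw [E1 y hy1', E1 x (by linarith)]
      nlinarith [mul_nonneg hA0.le (mul_nonneg (sub_nonneg.2 hxy)
        (show (0:ℝ) ≤ x + y - 2*β1 by linarith))]
    · have hyb2 := hy2 hy1''
      rcases le_or_gt 0 y with hy0 | hy0'
      · rw [E2 y hy0 hy1''.le]
        rcases le_or_gt 1 x with hx1 | hx1
        · rw [E1 x hx1]
          nlinarith [mul_nonneg hA0.le (mul_nonneg (show (0:ℝ) ≤ x - 1 by linarith)
              (show (0:ℝ) ≤ x + 1 - 2*β1 by linarith)),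
            mul_nonneg hA0.le (mul_nonneg (show (0:ℝ) ≤ 1 - y by linarith)
              (show (0:ℝ) ≤ 1 + y - 2*β2 by linarith)), hj]
        · rw [E2 x (by linarith) hx1.le]
          nlinarith [mul_nonneg hA0.le (mul_nonneg (sub_nonneg.2 hxy)
            (show (0:ℝ) ≤ x + y - 2*β2 by linarith))]
      · have hyb3 := hy3 hy0'
        rw [E3 y hy0'.le]
        rcases le_or_gt 1 x with hx1 | hx1
        · rw [E1 x hx1]
          nlinarith [mul_nonneg hA0.le (mul_nonneg (show (0:ℝ) ≤ x - 1 by linarith)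
              (show (0:ℝ) ≤ x + 1 - 2*β1 by linarith)),
            mul_nonneg hA0.le (show (0:ℝ) ≤ 1 - 2*β2 by linarith),
            mul_nonneg hA0.le (mul_nonneg (show (0:ℝ) ≤ -y by linarith)
              (show (0:ℝ) ≤ y - 2*β3 by linarith)), hj]
        · rcases le_or_gt 0 x with hx0 | hx0
          · rw [E2 x hx0 hx1.le]
            nlinarith [mul_nonneg hA0.le (mul_nonneg hx0
                (show (0:ℝ) ≤ x - 2*β2 by linarith)),
              mul_nonneg hA0.le (mul_nonneg (show (0:ℝ) ≤ -y by linarith)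
                (show (0:ℝ) ≤ y - 2*β3 by linarith))]
          · rw [E3 x hx0.le]
            nlinarith [mul_nonneg hA0.le (mul_nonneg (sub_nonneg.2 hxy)
              (show (0:ℝ) ≤ x + y - 2*β3 by linarith))]
  refine IsGreatest.csSup_eq ?_
  split_ifs at hK with c1 c2 c3 c4 c5 c6
  · -- πhi ≤ β1
    have hKv : mmH p r R μlo μhi σhi πhi = K := by
      rw [E1 πhi hπhi, hK]; linear_combination (-πhi) * h1
    refine ⟨⟨πhi, Set.mem_Icc.mpr ⟨by linarith, le_refl _⟩, hKv⟩, ?_⟩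
    rintro z ⟨x, hx, rfl⟩
    obtain ⟨hx1, hx2⟩ := Set.mem_Icc.mp hx
    rw [← hKv]
    exact INC x πhi hx2 (by linarith) (fun _ => by linarith) (fun _ => c1)
  · -- 1 ≤ β1 < πhi
    have hKv : mmH p r R μlo μhi σhi β1 = K := by
      rw [E1 β1 c2, hK, hv1]; ring
    refine ⟨⟨β1, Set.mem_Icc.mpr ⟨by linarith, (not_le.mp c1).le⟩, hKv⟩, ?_⟩
    rintro z ⟨x, hx, rfl⟩
    obtain ⟨hx1, hx2⟩ := Set.mem_Icc.mp hx
    rw [← hKv]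
    rcases le_total x β1 with hc | hc
    · exact INC x β1 hc (by linarith) (fun _ => hb12) (fun _ => le_refl _)
    · exact DEC x β1 hc (le_refl _) (fun h' => by linarith) (fun h' => by linarith)
  · -- β1 < 1 ≤ β2
    have hKv : mmH p r R μlo μhi σhi 1 = K := by
      rw [E2 1 (by norm_num) (le_refl _), hK]; linear_combination (-1 : ℝ) * h2 - hA
    refine ⟨⟨1, Set.mem_Icc.mpr ⟨by linarith, hπhi⟩, hKv⟩, ?_⟩
    rintro z ⟨x, hx, rfl⟩
    obtain ⟨hx1, hx2⟩ := Set.mem_Icc.mp hx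
    rw [← hKv]
    have hβ1lt : β1 < 1 := not_le.mp c2
    rcases le_total x 1 with hc | hc
    · exact INC x 1 hc (by linarith) (fun _ => c3) (fun h' => by linarith)
    · exact DEC x 1 hc hβ1lt.le (fun h' => by linarith) (fun h' => by linarith)
  · -- 0 ≤ β2 < 1
    have hβ2lt : β2 < 1 := not_le.mp c3
    have hKv : mmH p r R μlo μhi σhi β2 = K := by
      rw [E2 β2 c4 hβ2lt.le, hK, hv2]; ring
    refine ⟨⟨β2, Set.mem_Icc.mpr ⟨by linarith, by linarith⟩, hKv⟩, ?_⟩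
    rintro z ⟨x, hx, rfl⟩
    obtain ⟨hx1, hx2⟩ := Set.mem_Icc.mp hx
    rw [← hKv]
    rcases le_total x β2 with hc | hc
    · exact INC x β2 hc hb23 (fun _ => le_refl _) (fun h' => by linarith)
    · exact DEC x β2 hc hb12 (fun _ => le_refl _) (fun h' => by linarith)
  · -- β2 < 0 ≤ β3
    have hβ2lt : β2 < 0 := not_le.mp c4
    have hKv : mmH p r R μlo μhi σhi 0 = K := by
      rw [E3 0 (le_refl _), hK]; ring
    refine ⟨⟨0, Set.mem_Icc.mpr ⟨hπlo, by linarith⟩, hKv⟩, ?_⟩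
    rintro z ⟨x, hx, rfl⟩
    obtain ⟨hx1, hx2⟩ := Set.mem_Icc.mp hx
    rw [← hKv]
    rcases le_total x 0 with hc | hc
    · exact INC x 0 hc c5 (fun h' => by linarith) (fun h' => by linarith)
    · exact DEC x 0 hc (by linarith) (fun _ => by linarith) (fun h' => by linarith)
  · -- πlo ≤ β3 < 0
    have hβ3lt : β3 < 0 := not_le.mp c5
    have hKv : mmH p r R μlo μhi σhi β3 = K := by
      rw [E3 β3 hβ3lt.le, hK, hv3]; ring
    refine ⟨⟨β3, Set.mem_Icc.mpr ⟨c6, by linarith⟩, hKv⟩, ?_⟩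
    rintro z ⟨x, hx, rfl⟩
    obtain ⟨hx1, hx2⟩ := Set.mem_Icc.mp hx
    rw [← hKv]
    rcases le_total x β3 with hc | hc
    · exact INC x β3 hc (le_refl _) (fun h' => by linarith) (fun h' => by linarith)
    · exact DEC x β3 hc (by linarith) (fun _ => by linarith) (fun _ => le_refl _)
  · -- β3 < πlo
    have hβ3lt : β3 < πlo := not_le.mp c6
    have hKv : mmH p r R μlo μhi σhi πlo = K := by
      rw [E3 πlo hπlo, hK]; linear_combination (-πlo) * h3
    refine ⟨⟨πlo, Set.mem_Icc.mpr ⟨le_refl _, by linarith⟩, hKv⟩, ?_⟩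
    rintro z ⟨x, hx, rfl⟩
    obtain ⟨hx1, hx2⟩ := Set.mem_Icc.mp hx
    rw [← hKv]
    exact DEC x πlo hx1 (by linarith) (fun _ => by linarith) (fun _ => by linarith)
end

section
/- Suppose μ̲ − r > 0. Then the function h₁ has exactly one zero α₀ in (0, ∞); moreover, if in addition μ̲ − r < α̂, then α₀ ∈ (0, ᾱ). -/
/-- If `μ̲ - r > 0`, the function `h₁` has exactly one zero `α₀` in `(0, ∞)`;
moreover if `μ̲ - r < α̂` then `α₀ ∈ (0, ᾱ)`. -/
theorem h1_unique_zero
    (r μlo σlo k q αbar : ℝ)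
    (hσlo : 0 ≤ σlo) (hk : 0 < k) (hq0 : 0 < q) (hq1 : q < 1) (hαbar : 0 < αbar)
    (h1 : ℝ → ℝ)
    (hh1 : ∀ α : ℝ, 0 < α →
      h1 α = 2 * σlo ^ 2 + k * (2 - q) * α ^ q - k * q * (μlo - r) * α ^ (q - 1))
    (αhat : ℝ)
    (hαhat : αhat = (2 * σlo ^ 2 * αbar ^ (1 - q) + k * (2 - q) * αbar) / (k * q))
    (hμr : 0 < μlo - r) :
    (∃! α₀ : ℝ, 0 < α₀ ∧ h1 α₀ = 0) ∧
    (μlo - r < αhat → ∀ α₀ : ℝ, 0 < α₀ ∧ h1 α₀ = 0 → α₀ < αbar) := by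
  set g : ℝ → ℝ := fun x => 2 * σlo ^ 2 * x ^ (1 - q) + k * (2 - q) * x - k * q * (μlo - r)
    with hg
  have h1q : 0 < 1 - q := by linarith
  -- h1 α = 0 ↔ g α = 0 for α > 0
  have key : ∀ α : ℝ, 0 < α → (h1 α = 0 ↔ g α = 0) := by
    intro α hα
    have e1 : α ^ (1 - q) * α ^ q = α := by
      rw [← Real.rpow_add hα]; norm_num
    have e2 : α ^ (1 - q) * α ^ (q - 1) = 1 := by
      rw [← Real.rpow_add hα]; norm_num
    have hpos : (0:ℝ) < α ^ (1 - q) := Real.rpow_pos_of_pos hα _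
    have hgα : g α = α ^ (1 - q) * h1 α := by
      rw [hh1 α hα, hg]
      simp only
      linear_combination (-(k * (2 - q))) * e1 + (k * q * (μlo - r)) * e2
    rw [hgα]
    constructor
    · intro h; rw [h, mul_zero]
    · intro h
      rcases mul_eq_zero.1 h with h' | h'
      · exact absurd h' hpos.ne'
      · exact h'
  -- g is strictly monotone on [0, ∞)
  have hmono : StrictMonoOn g (Set.Ici 0) := by
    intro x hx y hy hxy
    have h1' : x ^ (1 - q) ≤ y ^ (1 - q) :=
      Real.rpow_le_rpow hx hxy.le h1q.le
    have h2' : k * (2 - q) * x < k * (2 - q) * y := by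
      apply mul_lt_mul_of_pos_left hxy
      nlinarith
    have hσ2 : (0:ℝ) ≤ 2 * σlo ^ 2 := by positivity
    simp only [hg]
    nlinarith [mul_le_mul_of_nonneg_left h1' hσ2]
  -- g is continuous
  have hcont : Continuous g := by
    have : Continuous fun x : ℝ => x ^ (1 - q) :=
      continuous_iff_continuousAt.2 fun x =>
        Real.continuousAt_rpow_const x (1 - q) (Or.inr h1q.le)
    fun_prop
  -- g 0 < 0
  have hg0 : g 0 < 0 := by
    simp only [hg, Real.zero_rpow h1q.ne', mul_zero, zero_add]
    nlinarith [mul_pos (mul_pos hk hq0) hμr]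
  -- a point where g is positive
  set B : ℝ := q * (μlo - r) / (2 - q) + 1 with hB
  have h2q : (0:ℝ) < 2 - q := by linarith
  have hBpos : 0 < B := by
    have h' : 0 < q * (μlo - r) / (2 - q) := div_pos (mul_pos hq0 hμr) h2q
    rw [hB]; linarith
  have hgB : 0 < g B := by
    have hd : (2 - q) * (q * (μlo - r) / (2 - q)) = q * (μlo - r) := by
      field_simp
    have hB1 : k * (2 - q) * B - k * q * (μlo - r) = k * (2 - q) := by
      rw [hB]; linear_combination k * hd
    have : (0:ℝ) ≤ 2 * σlo ^ 2 * B ^ (1 - q) := by positivity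
    simp only [hg]
    nlinarith
  -- existence of the zero via IVT
  obtain ⟨α₀, hα₀mem, hα₀⟩ :=
    intermediate_value_Icc hBpos.le hcont.continuousOn
      ⟨hg0.le, hgB.le⟩
  have hα₀pos : 0 < α₀ := by
    rcases lt_or_eq_of_le hα₀mem.1 with h | h
    · exact h
    · exfalso; rw [← h] at hα₀; linarith
  constructor
  · refine ⟨α₀, ⟨hα₀pos, (key α₀ hα₀pos).2 hα₀⟩, ?_⟩
    rintro y ⟨hy, hy0⟩
    have hgy : g y = 0 := (key y hy).1 hy0
    exact hmono.injOn (Set.mem_Ici.2 hy.le) (Set.mem_Ici.2 hα₀pos.le)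
      (by rw [hgy, hα₀])
  · intro hlt α₁ ⟨hα₁pos, hα₁0⟩
    have hgα₁ : g α₁ = 0 := (key α₁ hα₁pos).1 hα₁0
    have hgbar : 0 < g αbar := by
      have hkq : k * q ≠ 0 := by positivity
      have : αhat * (k * q) = 2 * σlo ^ 2 * αbar ^ (1 - q) + k * (2 - q) * αbar := by
        rw [hαhat]; field_simp
      simp only [hg]
      nlinarith [mul_pos (mul_pos hk hq0) (sub_pos.2 hlt)]
    by_contra hle
    push_neg at hle
    have := hmono.monotoneOn (Set.mem_Ici.2 hαbar.le) (Set.mem_Ici.2 hα₁pos.le) hle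
    rw [hgα₁] at this
    linarith
end

section
/- Suppose 0 < μ̲ − r < α̂, and let α₀ ∈ (0, ᾱ) be the unique zero of h₁ in (0, ∞). Set μ* = μ̲ + α₀, v* = σ̲² + k·α₀^q, and π* = (μ* − r)/((1−p)·v*). Then (π*; μ*, v*) is a saddle point of g over ℝ × B, i.e. g(x_π; μ*, v*) ≤ g(π*; μ*, v*) ≤ g(π*; x_μ, x_σ) for all x_π ∈ ℝ and all (x_μ, x_σ) ∈ B. -/
/-- Interior worst-case parameters: if `0 < μ̲ - r < α̂` and `α₀ ∈ (0, ᾱ)` is the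
zero of `h₁`, then `(π*; μ*, v*)` is a saddle point of `g` over `ℝ × B`. -/
theorem saddle_point_interior
    (p r μlo σlo k q αbar : ℝ) (hp : p < 1)
    (hσlo : 0 ≤ σlo) (hk : 0 < k) (hq0 : 0 < q) (hq1 : q < 1) (hαbar : 0 < αbar)
    (g : ℝ → ℝ → ℝ → ℝ)
    (hg : ∀ xπ xμ xσ, g xπ xμ xσ = (p - 1) / 2 * xσ * xπ ^ 2 + (xμ - r) * xπ + r)
    (αhat : ℝ)
    (hαhat : αhat = (2 * σlo ^ 2 * αbar ^ (1 - q) + k * (2 - q) * αbar) / (k * q))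
    (hμr0 : 0 < μlo - r) (hμr1 : μlo - r < αhat)
    (α₀ : ℝ) (hα₀0 : 0 < α₀) (hα₀1 : α₀ < αbar)
    (hzero : 2 * σlo ^ 2 + k * (2 - q) * α₀ ^ q - k * q * (μlo - r) * α₀ ^ (q - 1) = 0)
    (μstar vstar πstar : ℝ)
    (hμstar : μstar = μlo + α₀) (hvstar : vstar = σlo ^ 2 + k * α₀ ^ q)
    (hπstar : πstar = (μstar - r) / ((1 - p) * vstar)) :
    (∀ xπ : ℝ, g xπ μstar vstar ≤ g πstar μstar vstar) ∧
    (∀ α ∈ Set.Icc (0 : ℝ) αbar,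
      g πstar μstar vstar ≤ g πstar (μlo + α) (σlo ^ 2 + k * α ^ q)) := by
  have hAq : (0:ℝ) < α₀ ^ q := Real.rpow_pos_of_pos hα₀0 q
  have hE : (0:ℝ) < α₀ ^ (q - 1) := Real.rpow_pos_of_pos hα₀0 (q - 1)
  have hv : 0 < vstar := by rw [hvstar]; positivity
  have h1p : (0:ℝ) < 1 - p := by linarith
  have hD : 0 < (1 - p) * vstar := mul_pos h1p hv
  have hπeq : (1 - p) * vstar * πstar = μstar - r := by
    rw [hπstar]; field_simp
  have hμsr : 0 < μstar - r := by rw [hμstar]; linarith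
  have hπpos : 0 < πstar := by
    rw [hπstar]; exact div_pos hμsr hD
  -- rpow identities
  have hEq : α₀ ^ (q - 1) * α₀ = α₀ ^ q := by
    rw [← Real.rpow_add_one (ne_of_gt hα₀0)]; norm_num
  have hinv : α₀ ^ (1 - q) * α₀ ^ (q - 1) = 1 := by
    rw [← Real.rpow_add hα₀0]; norm_num
  -- key identity from the first-order condition
  have hkq : k * q * (μstar - r) * α₀ ^ (q - 1) = 2 * vstar := by
    rw [hμstar, hvstar]
    linear_combination (k * q) * hEq - hzero
  -- c' * q * E = πstar where c' = (1-p)/2 * πstar^2 * k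
  have hπE : (1 - p) / 2 * πstar ^ 2 * k * q * α₀ ^ (q - 1) = πstar := by
    have h2v : (2 * vstar) * ((1 - p) / 2 * πstar ^ 2 * k * q * α₀ ^ (q - 1)) =
        (2 * vstar) * πstar := by
      linear_combination (k * q * α₀ ^ (q - 1) * πstar) * hπeq + πstar * hkq
    exact mul_left_cancel₀ (by positivity) h2v
  constructor
  · intro xπ
    rw [hg, hg, ← hπeq]
    nlinarith [mul_nonneg hD.le (sq_nonneg (xπ - πstar))]
  · rintro α ⟨hα0, hα1⟩
    have hαq : (0:ℝ) ≤ α ^ q := Real.rpow_nonneg hα0 q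
    have hAM : α ^ q * α₀ ^ (1 - q) ≤ q * α + (1 - q) * α₀ :=
      Real.geom_mean_le_arith_mean2_weighted hq0.le (by linarith) hα0 hα₀0.le (by ring)
    have htangent : α ^ q ≤ q * α₀ ^ (q - 1) * α + (1 - q) * α₀ ^ q := by
      calc α ^ q = α ^ q * (α₀ ^ (1 - q) * α₀ ^ (q - 1)) := by rw [hinv]; ring
        _ = α ^ q * α₀ ^ (1 - q) * α₀ ^ (q - 1) := by ring
        _ ≤ (q * α + (1 - q) * α₀) * α₀ ^ (q - 1) :=
            mul_le_mul_of_nonneg_right hAM hE.le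
        _ = q * α₀ ^ (q - 1) * α + (1 - q) * (α₀ ^ (q - 1) * α₀) := by ring
        _ = q * α₀ ^ (q - 1) * α + (1 - q) * α₀ ^ q := by rw [hEq]
    have hc' : (0:ℝ) ≤ (1 - p) / 2 * πstar ^ 2 * k := by positivity
    have h5 : ((1 - p) / 2 * πstar ^ 2 * k) * (α ^ q) ≤
        ((1 - p) / 2 * πstar ^ 2 * k) * (q * α₀ ^ (q - 1) * α + (1 - q) * α₀ ^ q) :=
      mul_le_mul_of_nonneg_left htangent hc'
    have hid : ((1 - p) / 2 * πstar ^ 2 * k) * (q * α₀ ^ (q - 1) * α + (1 - q) * α₀ ^ q)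
        - ((1 - p) / 2 * πstar ^ 2 * k) * (α₀ ^ q) = πstar * α - πstar * α₀ := by
      linear_combination (α - α₀) * hπE + ((1 - p) / 2 * πstar ^ 2 * k * q) * hEq
    have h8 : ((1 - p) / 2 * πstar ^ 2 * k) * (α ^ q)
        - ((1 - p) / 2 * πstar ^ 2 * k) * (α₀ ^ q) ≤ πstar * α - πstar * α₀ := by
      linarith
    rw [hg, hg, hμstar, hvstar]
    linarith [h8]
end

section
/- Suppose either μ̲ − r ≤ −ᾱ or μ̲ − r ≥ α̂. Set μ* = μ̲ + ᾱ, v* = σ̲² + k·ᾱ^q, and π* = (μ* − r)/((1−p)·v*). Then (π*; μ*, v*) is a saddle point of g over ℝ × B, i.e. g(x_π; μ*, v*) ≤ g(π*; μ*, v*) ≤ g(π*; x_μ, x_σ) for all x_π ∈ ℝ and all (x_μ, x_σ) ∈ B. -/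
set_option maxHeartbeats 1000000 in
/-- Boundary worst-case parameters: if `μ̲ - r ≤ -ᾱ` or `μ̲ - r ≥ α̂`, then
`(π*; μ̲ + ᾱ, σ̲² + k ᾱ^q)` is a saddle point of `g` over `ℝ × B`. -/
theorem saddle_point_boundary
    (p r μlo σlo k q αbar : ℝ) (hp : p < 1)
    (hσlo : 0 ≤ σlo) (hk : 0 < k) (hq0 : 0 < q) (hq1 : q < 1) (hαbar : 0 < αbar)
    (g : ℝ → ℝ → ℝ → ℝ)
    (hg : ∀ xπ xμ xσ, g xπ xμ xσ = (p - 1) / 2 * xσ * xπ ^ 2 + (xμ - r) * xπ + r)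
    (αhat : ℝ)
    (hαhat : αhat = (2 * σlo ^ 2 * αbar ^ (1 - q) + k * (2 - q) * αbar) / (k * q))
    (hcase : μlo - r ≤ -αbar ∨ αhat ≤ μlo - r)
    (μstar vstar πstar : ℝ)
    (hμstar : μstar = μlo + αbar) (hvstar : vstar = σlo ^ 2 + k * αbar ^ q)
    (hπstar : πstar = (μstar - r) / ((1 - p) * vstar)) :
    (∀ xπ : ℝ, g xπ μstar vstar ≤ g πstar μstar vstar) ∧
    (∀ α ∈ Set.Icc (0 : ℝ) αbar,
      g πstar μstar vstar ≤ g πstar (μlo + α) (σlo ^ 2 + k * α ^ q)) := by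
  have hA : (0:ℝ) < αbar ^ q := Real.rpow_pos_of_pos hαbar q
  have hv : 0 < vstar := by
    rw [hvstar]; positivity
  have hp1 : 0 < 1 - p := by linarith
  have hμr : μstar - r = (1 - p) * vstar * πstar := by
    rw [hπstar]; field_simp
  constructor
  · intro xπ
    rw [hg, hg, hμr]
    nlinarith [mul_nonneg (mul_nonneg hp1.le hv.le) (sq_nonneg (xπ - πstar))]
  · rintro α ⟨hα0, hααbar⟩
    rw [hg, hg, hμstar, hvstar]
    have hBA : α ^ q ≤ αbar ^ q :=
      Real.rpow_le_rpow hα0 hααbar hq0.le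
    rcases hcase with h | h
    · -- π* ≤ 0
      have hπ : πstar ≤ 0 := by
        rw [hπstar]
        apply div_nonpos_of_nonpos_of_nonneg
        · rw [hμstar]; linarith
        · positivity
      nlinarith [mul_nonneg (sub_nonneg.2 hααbar) (neg_nonneg.2 hπ),
        mul_nonneg (mul_nonneg hk.le (sub_nonneg.2 hBA)) (sq_nonneg πstar)]
    · -- π* large
      have hC : (0:ℝ) < αbar ^ (q - 1) := Real.rpow_pos_of_pos hαbar _
      have hD : (0:ℝ) < αbar ^ (1 - q) := Real.rpow_pos_of_pos hαbar _
      have hCD : αbar ^ (q - 1) * αbar ^ (1 - q) = 1 := by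
        rw [← Real.rpow_add hαbar]; norm_num
      have h4 : αbar ^ (q - 1) * αbar = αbar ^ q := by
        rw [← Real.rpow_add_one (ne_of_gt hαbar)]; ring_nf
      -- tangent line inequality
      have htan : q * αbar ^ (q - 1) * (αbar - α) ≤ αbar ^ q - α ^ q := by
        have hs : (-1:ℝ) ≤ α / αbar - 1 := by
          have : 0 ≤ α / αbar := div_nonneg hα0 hαbar.le
          linarith
        have hb := rpow_one_add_le_one_add_mul_self hs hq0.le hq1.le
        have h1 : (1 + (α / αbar - 1)) = α / αbar := by ring
        rw [h1] at hb
        have h2 : (α / αbar) ^ q = α ^ q * (αbar ^ q)⁻¹ := by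
          rw [Real.div_rpow hα0 hαbar.le, div_eq_mul_inv]
        rw [h2] at hb
        have h3 := mul_le_mul_of_nonneg_right hb hA.le
        rw [mul_assoc, inv_mul_cancel₀ (ne_of_gt hA), mul_one] at h3
        have h6 : (1 + q * (α / αbar - 1)) * αbar ^ q
            = αbar ^ q + q * αbar ^ (q - 1) * (α - αbar) := by
          rw [← h4]; field_simp
        rw [h6] at h3
        linarith
      -- lower bound on πstar
      have hkey : 2 ≤ k * q * (1 - p) * πstar * αbar ^ (q - 1) := by
        have hstep : 2 * αbar ^ (1 - q) * vstar ≤ k * q * (μstar - r) := by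
          have heq : k * q * αhat = 2 * σlo ^ 2 * αbar ^ (1 - q) + k * (2 - q) * αbar := by
            rw [hαhat]; field_simp
          have hμ : αhat + αbar ≤ μstar - r := by rw [hμstar]; linarith
          have hAD : αbar ^ q * αbar ^ (1 - q) = αbar := by
            rw [← Real.rpow_add hαbar]; norm_num
          nlinarith [mul_pos hk hq0]
        rw [hμr] at hstep
        have h5 : 2 * αbar ^ (1 - q) ≤ k * q * (1 - p) * πstar := by
          nlinarith [hstep, hv]
        have h7 := mul_le_mul_of_nonneg_right h5 hC.le
        nlinarith [h7, hCD]
      have hπpos : 0 < πstar := by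
        nlinarith [hkey, mul_pos (mul_pos (mul_pos hk hq0) hp1) hC]
      have h6 := mul_le_mul_of_nonneg_right htan
        (mul_nonneg (mul_nonneg (by linarith : (0:ℝ) ≤ (1 - p) / 2) hk.le) (sq_nonneg πstar))
      have h7 := mul_le_mul_of_nonneg_right hkey
        (mul_nonneg (sub_nonneg.2 hααbar) hπpos.le)
      nlinarith [h6, h7]
end

section
/- The function q_L(t) = ln( λ/ρ + (1 − λ/ρ)·e^{−ρ(T−t)} ) is well defined on [0, T] (the argument of the logarithm is strictly positive there) and satisfies the integral equation q_L(t) = ∫_t^T ( λ·e^{−q_L(s)} − ρ ) ds for all t ∈ [0, T]. -/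
/-!
With `a = λ/ρ`, the argument `g(t) = a + (1 - a) e^{-ρ(T-t)}` is the convex combination
`a (1 - e) + e` of `a ≥ 0` and `1` with weight `e = e^{-ρ(T-t)} ∈ (0, 1]`, hence positive.
It solves the linear equation `g' = ρ (g - a)`, so `q_L = log g` solves
`q_L' = ρ - ρ a / g = ρ - λ e^{-q_L}` with `q_L(T) = log 1 = 0`, and the integral equation is the
fundamental theorem of calculus on `[t, T]`.
-/

open Real Set

lemma add_one_sub_mul_exp_pos {a x : ℝ} (ha : 0 ≤ a) (hx : x ≤ 0) :
    0 < a + (1 - a) * exp x := by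
  have hexp_le : exp x ≤ 1 := exp_le_one_iff.mpr hx
  nlinarith [exp_pos x]

lemma hasDerivAt_add_mul_exp_mul_sub (a b ρ T s : ℝ) :
    HasDerivAt (fun u => a + b * exp (-ρ * (T - u)))
      (ρ * (a + b * exp (-ρ * (T - s)) - a)) s := by
  have hlin : HasDerivAt (fun u => -ρ * (T - u)) ρ s := by
    simpa using ((hasDerivAt_id s).const_sub T).const_mul (-ρ)
  exact ((hlin.exp.const_mul b).const_add a).congr_deriv (by ring)

lemma HasDerivAt.log_of_hasDerivAt_mul_sub {g : ℝ → ℝ} {a ρ x : ℝ}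
    (hg : HasDerivAt g (ρ * (g x - a)) x) (hpos : 0 < g x) :
    HasDerivAt (fun u => Real.log (g u)) (ρ - ρ * a * Real.exp (-Real.log (g x))) x := by
  refine (hg.log hpos.ne').congr_deriv ?_
  rw [exp_neg, exp_log hpos]
  field_simp

lemma eq_intervalIntegral_of_hasDerivAt_neg {q f : ℝ → ℝ} {t T : ℝ} (htT : t ≤ T)
    (hqT : q T = 0) (hderiv : ∀ s ∈ Icc t T, HasDerivAt q (-f s) s)
    (hf : ContinuousOn f (Icc t T)) :
    q t = ∫ s in t..T, f s := by
  rw [← uIcc_of_le htT] at hderiv hf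
  have hftc := intervalIntegral.integral_eq_sub_of_hasDerivAt (f := fun u => -q u)
    (fun s hs => (hderiv s hs).neg.congr_deriv (neg_neg _)) hf.intervalIntegrable
  rw [hftc, hqT, neg_zero, zero_sub, neg_neg]

theorem qL_solves_integral_equation_general
    (T ρ lam : ℝ) (hρ : 0 < ρ) (hlam : 0 ≤ lam)
    (qL : ℝ → ℝ)
    (hqL : ∀ t : ℝ,
      qL t = Real.log (lam / ρ + (1 - lam / ρ) * Real.exp (-ρ * (T - t)))) :
    (∀ t ∈ Set.Icc (0 : ℝ) T,
      0 < lam / ρ + (1 - lam / ρ) * Real.exp (-ρ * (T - t))) ∧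
    (∀ t ∈ Set.Icc (0 : ℝ) T,
      qL t = ∫ s in t..T, (lam * Real.exp (-qL s) - ρ)) := by
  have hpos : ∀ s ≤ T, 0 < lam / ρ + (1 - lam / ρ) * exp (-ρ * (T - s)) := fun s hs =>
    add_one_sub_mul_exp_pos (div_nonneg hlam hρ.le) (by nlinarith)
  have hderiv : ∀ s ≤ T, HasDerivAt qL (-(lam * exp (-qL s) - ρ)) s := by
    intro s hs
    have hlog := HasDerivAt.log_of_hasDerivAt_mul_sub
      (hasDerivAt_add_mul_exp_mul_sub (lam / ρ) (1 - lam / ρ) ρ T s) (hpos s hs)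
    rw [funext hqL]
    refine hlog.congr_deriv ?_
    rw [mul_div_cancel₀ lam hρ.ne']
    ring
  have hqT : qL T = 0 := by simp [hqL]
  refine ⟨fun t ht => hpos t ht.2, fun t ht => ?_⟩
  refine eq_intervalIntegral_of_hasDerivAt_neg ht.2 hqT (fun s hs => hderiv s hs.2) ?_
  exact continuousOn_of_forall_continuousAt fun s hs =>
    ((hderiv s hs.2).continuousAt.neg.rexp.const_mul lam).sub continuousAt_const

/-- `q_L(t) = ln(λ/ρ + (1 - λ/ρ)·e^{-ρ(T-t)})` is well defined on `[0, T]` and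
satisfies `q_L(t) = ∫_t^T (λ e^{-q_L(s)} - ρ) ds`. -/
theorem qL_solves_integral_equation
    (T ρ lam : ℝ) (hT : 0 < T) (hρ : 0 < ρ) (hlam : 0 ≤ lam)
    (qL : ℝ → ℝ)
    (hqL : ∀ t : ℝ,
      qL t = Real.log (lam / ρ + (1 - lam / ρ) * Real.exp (-ρ * (T - t)))) :
    (∀ t ∈ Set.Icc (0 : ℝ) T,
      0 < lam / ρ + (1 - lam / ρ) * Real.exp (-ρ * (T - t))) ∧
    (∀ t ∈ Set.Icc (0 : ℝ) T,
      qL t = ∫ s in t..T, (lam * Real.exp (-qL s) - ρ)) :=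
  qL_solves_integral_equation_general T ρ lam hρ hlam qL hqL
end

section
/- Define ĉ(t) = λ·e^{−q_L(t)} and c*(t) = min( c̄, max( c̲, ĉ(t) ) ) for t ∈ [0, T]. Then c* is nonincreasing on [0, T] if ρ ≥ λ, and c* is nondecreasing on [0, T] if ρ ≤ λ. -/
/-- Time monotonicity of the optimal consumption in the logarithm utility case:
`c*` is nonincreasing on `[0, T]` if `ρ ≥ λ`, and nondecreasing if `ρ ≤ λ`. -/
theorem log_consumption_monotone
    (T ρ lam clo chi : ℝ) (hT : 0 < T) (hρ : 0 < ρ) (hlam : 0 < lam)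
    (hclo : 0 ≤ clo) (hc : clo ≤ chi)
    (qL : ℝ → ℝ)
    (hqL : ∀ t : ℝ,
      qL t = Real.log (lam / ρ + (1 - lam / ρ) * Real.exp (-ρ * (T - t))))
    (cstar : ℝ → ℝ)
    (hcstar : ∀ t : ℝ, cstar t = min chi (max clo (lam * Real.exp (-qL t)))) :
    (lam ≤ ρ → AntitoneOn cstar (Set.Icc 0 T)) ∧
    (ρ ≤ lam → MonotoneOn cstar (Set.Icc 0 T)) := by
  set a := lam / ρ with ha
  have ha0 : 0 < a := div_pos hlam hρ
  -- positivity of the argument of the log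
  have hgpos : ∀ t ∈ Set.Icc (0:ℝ) T,
      0 < a + (1 - a) * Real.exp (-ρ * (T - t)) := by
    intro t ht
    have hu0 : 0 < Real.exp (-ρ * (T - t)) := Real.exp_pos _
    have hu1 : Real.exp (-ρ * (T - t)) ≤ 1 := by
      apply Real.exp_le_one_iff.mpr
      nlinarith [ht.2]
    nlinarith
  -- the value of ĉ
  have hchat : ∀ t ∈ Set.Icc (0:ℝ) T,
      lam * Real.exp (-qL t) = lam / (a + (1 - a) * Real.exp (-ρ * (T - t))) := by
    intro t ht
    rw [hqL t, Real.exp_neg, Real.exp_log (hgpos t ht), div_eq_mul_inv]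
  -- outer clamp is monotone
  have houter : ∀ x y : ℝ, x ≤ y →
      min chi (max clo x) ≤ min chi (max clo y) := by
    intro x y h
    exact min_le_min le_rfl (max_le_max le_rfl h)
  constructor
  · intro hlr s hs t ht hst
    rw [hcstar s, hcstar t]
    apply houter
    rw [hchat s hs, hchat t ht]
    apply div_le_div_of_nonneg_left hlam.le (hgpos s hs)
    have : Real.exp (-ρ * (T - s)) ≤ Real.exp (-ρ * (T - t)) := by
      apply Real.exp_le_exp.mpr; nlinarith
    have ha1 : a ≤ 1 := (div_le_one hρ).mpr hlr
    nlinarith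
  · intro hrl s hs t ht hst
    rw [hcstar s, hcstar t]
    apply houter
    rw [hchat s hs, hchat t ht]
    apply div_le_div_of_nonneg_left hlam.le (hgpos t ht)
    have : Real.exp (-ρ * (T - s)) ≤ Real.exp (-ρ * (T - t)) := by
      apply Real.exp_le_exp.mpr; nlinarith
    have ha1 : 1 ≤ a := (one_le_div hρ).mpr hrl
    nlinarith
end

section
/- Suppose q : [0, T] → ℝ is differentiable and satisfies q′(t) = ρ − pK − p·Φ(q(t)) for all t ∈ [0, T]. Then the sign of q′ does not change: either q′(t) ≥ 0 for all t ∈ [0, T], or q′(t) ≤ 0 for all t ∈ [0, T]. -/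
open Set

/-- Helper: if `q` is continuous on `[u,v]`, `q v < q u`, and at every point of the
level set `{q = q u}` the function `q` has a positive derivative, we get a contradiction. -/
lemma qP_aux_helper (q : ℝ → ℝ) (u v : ℝ) (huv : u < v)
    (hcont : ContinuousOn q (Set.Icc u v))
    (hlt : q v < q u)
    (hderiv : ∀ c ∈ Set.Icc u v, q c = q u → ∃ d, 0 < d ∧ HasDerivAt q d c) :
    False := by
  set S : Set ℝ := Set.Icc u v ∩ q ⁻¹' {q u} with hS
  have hSne : S.Nonempty := ⟨u, ⟨le_refl u, huv.le⟩, rfl⟩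
  have hSbdd : BddAbove S := ⟨v, fun t ht => ht.1.2⟩
  have hSclosed : IsClosed S :=
    hcont.preimage_isClosed_of_isClosed isClosed_Icc isClosed_singleton
  set c := sSup S with hcdef
  have hcS : c ∈ S := hSclosed.csSup_mem hSne hSbdd
  have hcIcc : c ∈ Set.Icc u v := hcS.1
  have hqc : q c = q u := hcS.2
  have hcv : c < v := by
    rcases lt_or_eq_of_le hcIcc.2 with h | h
    · exact h
    · exfalso; rw [h] at hqc; exact absurd hqc (ne_of_lt hlt)
  -- every point in (c, v] has q t < q u
  have hclaim : ∀ t ∈ Set.Ioc c v, q t < q u := by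
    intro t ht
    by_contra h
    push_neg at h
    have htIcc : t ∈ Set.Icc u v := ⟨hcIcc.1.trans ht.1.le, ht.2⟩
    have hne : q t ≠ q u := by
      intro he
      have : t ≤ c := le_csSup hSbdd ⟨htIcc, he⟩
      exact absurd this (not_le.mpr ht.1)
    have hgt : q u < q t := lt_of_le_of_ne h (Ne.symm hne)
    have hsub : Set.Icc t v ⊆ Set.Icc u v :=
      Set.Icc_subset_Icc htIcc.1 le_rfl
    have hIVT := intermediate_value_Icc' ht.2 (hcont.mono hsub)
    have hmem : q u ∈ Set.Icc (q v) (q t) := ⟨hlt.le, hgt.le⟩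
    obtain ⟨s, hs, hqs⟩ := hIVT hmem
    have : s ≤ c := le_csSup hSbdd ⟨⟨htIcc.1.trans hs.1, hs.2⟩, hqs⟩
    exact absurd (ht.1.trans_le hs.1) (not_lt.mpr this)
  -- positive derivative at c gives a point just to the right with q t > q u
  obtain ⟨d, hd, hder⟩ := hderiv c hcIcc hqc
  have hslope := hasDerivAt_iff_tendsto_slope.mp hder
  have hev : ∀ᶠ t in nhdsWithin c {c}ᶜ, 0 < slope q c t :=
    hslope.eventually (eventually_gt_nhds hd)
  have hle : nhdsWithin c (Set.Ioi c) ≤ nhdsWithin c {c}ᶜ :=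
    nhdsWithin_mono c (fun x hx => (ne_of_gt hx))
  have hev' : ∀ᶠ t in nhdsWithin c (Set.Ioi c), 0 < slope q c t := hev.filter_mono hle
  have hmem : Set.Ioc c v ∈ nhdsWithin c (Set.Ioi c) := Ioc_mem_nhdsGT hcv
  obtain ⟨t, hst, htm⟩ := (hev'.and (Filter.eventually_of_mem hmem fun x hx => hx)).exists
  have htc : 0 < t - c := sub_pos.mpr htm.1
  have : 0 < q t - q c := by
    have := mul_pos hst htc
    rwa [slope_def_field, div_mul_cancel₀ _ (ne_of_gt htc)] at this
  have h1 : q u < q t := by rw [← hqc]; linarith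
  exact lt_asymm h1 (hclaim t htm)

/-- The sign of `q′(t) = ρ - pK - p·Φ(q(t))` does not change on `[0, T]`. -/
theorem qP_derivative_sign_constant
    (T ρ K lam clo chi p : ℝ) (hT : 0 < T) (hρ : 0 ≤ ρ)
    (hlam : 0 < lam) (hclo : 0 < clo) (hc : clo < chi)
    (hp1 : p < 1) (hp0 : p ≠ 0)
    (Φ : ℝ → ℝ)
    (hΦ : ∀ x : ℝ, Φ x =
      if x < (p - 1) * Real.log chi + Real.log lam then
        lam / p * chi ^ p * Real.exp (-x) - chi
      else if x ≤ (p - 1) * Real.log clo + Real.log lam then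
        (1 - p) / p * lam ^ (1 / (1 - p)) * Real.exp (x / (p - 1))
      else
        lam / p * clo ^ p * Real.exp (-x) - clo)
    (q : ℝ → ℝ)
    (hq : ∀ t ∈ Set.Icc (0 : ℝ) T, HasDerivAt q (ρ - p * K - p * Φ (q t)) t) :
    (∀ t ∈ Set.Icc (0 : ℝ) T, 0 ≤ ρ - p * K - p * Φ (q t)) ∨
    (∀ t ∈ Set.Icc (0 : ℝ) T, ρ - p * K - p * Φ (q t) ≤ 0) := by
  have hchi : (0:ℝ) < chi := hclo.trans hc
  have hp1' : (0:ℝ) < 1 - p := by linarith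
  have hpm1 : p - 1 < 0 := by linarith
  set A := (p - 1) * Real.log chi + Real.log lam with hAdef
  set B := (p - 1) * Real.log clo + Real.log lam with hBdef
  have hAB : A ≤ B := by
    have hlog : Real.log clo < Real.log chi := Real.log_lt_log hclo hc
    have : (p - 1) * Real.log chi ≤ (p - 1) * Real.log clo := by nlinarith
    simpa [hAdef, hBdef] using add_le_add_right this (Real.log lam)
  -- the three branches of p * Φ
  set g1 : ℝ → ℝ := fun z => lam * chi ^ p * Real.exp (-z) - p * chi with hg1
  set g2 : ℝ → ℝ := fun z => (1 - p) * lam ^ (1 / (1 - p)) * Real.exp (z / (p - 1)) with hg2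
  set g3 : ℝ → ℝ := fun z => lam * clo ^ p * Real.exp (-z) - p * clo with hg3
  have hchip : (0:ℝ) < chi ^ p := Real.rpow_pos_of_pos hchi p
  have hclop : (0:ℝ) < clo ^ p := Real.rpow_pos_of_pos hclo p
  have hlamp : (0:ℝ) < lam ^ (1 / (1 - p)) := Real.rpow_pos_of_pos hlam _
  have hg1anti : ∀ x y, x ≤ y → g1 y ≤ g1 x := by
    intro x y hxy
    have hexp : Real.exp (-y) ≤ Real.exp (-x) := Real.exp_le_exp.mpr (by linarith)
    have := mul_le_mul_of_nonneg_left hexp (le_of_lt (mul_pos hlam hchip))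
    simp only [hg1]; nlinarith
  have hg3anti : ∀ x y, x ≤ y → g3 y ≤ g3 x := by
    intro x y hxy
    have hexp : Real.exp (-y) ≤ Real.exp (-x) := Real.exp_le_exp.mpr (by linarith)
    have := mul_le_mul_of_nonneg_left hexp (le_of_lt (mul_pos hlam hclop))
    simp only [hg3]; nlinarith
  have hg2anti : ∀ x y, x ≤ y → g2 y ≤ g2 x := by
    intro x y hxy
    have hdiv : y / (p - 1) ≤ x / (p - 1) := div_le_div_of_nonpos_of_le hpm1.le hxy
    have hexp : Real.exp (y / (p - 1)) ≤ Real.exp (x / (p - 1)) := Real.exp_le_exp.mpr hdiv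
    have := mul_le_mul_of_nonneg_left hexp (le_of_lt (mul_pos hp1' hlamp))
    simpa [hg2, mul_assoc] using this
  -- boundary values
  have hrw_chi : chi ^ p = Real.exp (p * Real.log chi) := by
    rw [Real.rpow_def_of_pos hchi, mul_comm]
  have hrw_clo : clo ^ p = Real.exp (p * Real.log clo) := by
    rw [Real.rpow_def_of_pos hclo, mul_comm]
  have hrw_lam : lam ^ (1 / (1 - p)) = Real.exp (Real.log lam / (1 - p)) := by
    rw [Real.rpow_def_of_pos hlam]; ring_nf
  have h1p : (1:ℝ) - p ≠ 0 := by linarith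
  have hpm1' : p - 1 ≠ 0 := by linarith
  have hE1 : g1 A = g2 A := by
    have e1 : Real.exp (p * Real.log chi) * Real.exp (-A) = chi / lam := by
      rw [← Real.exp_add]
      have h : p * Real.log chi + -A = Real.log chi - Real.log lam := by
        rw [hAdef]; ring
      rw [h, Real.exp_sub, Real.exp_log hchi, Real.exp_log hlam]
    have e2 : Real.exp (Real.log lam / (1 - p)) * Real.exp (A / (p - 1)) = chi := by
      rw [← Real.exp_add]
      have h : Real.log lam / (1 - p) + A / (p - 1) = Real.log chi := by
        rw [hAdef]; field_simp; ring
      rw [h, Real.exp_log hchi]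
    simp only [hg1, hg2, hrw_chi, hrw_lam, mul_assoc, e1, e2]
    field_simp
  have hE2 : g2 B = g3 B := by
    have e1 : Real.exp (p * Real.log clo) * Real.exp (-B) = clo / lam := by
      rw [← Real.exp_add]
      have h : p * Real.log clo + -B = Real.log clo - Real.log lam := by
        rw [hBdef]; ring
      rw [h, Real.exp_sub, Real.exp_log hclo, Real.exp_log hlam]
    have e2 : Real.exp (Real.log lam / (1 - p)) * Real.exp (B / (p - 1)) = clo := by
      rw [← Real.exp_add]
      have h : Real.log lam / (1 - p) + B / (p - 1) = Real.log clo := by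
        rw [hBdef]; field_simp; ring
      rw [h, Real.exp_log hclo]
    simp only [hg2, hg3, hrw_clo, hrw_lam, mul_assoc, e1, e2]
    field_simp
  -- p * Φ equals the appropriate branch
  have hpΦ : ∀ x, p * Φ x =
      if x < A then g1 x else if x ≤ B then g2 x else g3 x := by
    intro x
    rw [hΦ x]
    split_ifs with h1 h2
    · simp only [hg1]; field_simp; try ring
    · simp only [hg2]; field_simp; try ring
    · simp only [hg3]; field_simp; try ring
  -- p * Φ is antitone
  have hanti : ∀ x y, x ≤ y → p * Φ y ≤ p * Φ x := by
    intro x y hxy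
    rw [hpΦ x, hpΦ y]
    rcases lt_or_ge x A with hx1 | hx1
    · rw [if_pos hx1]
      rcases lt_or_ge y A with hy1 | hy1
      · rw [if_pos hy1]; exact hg1anti x y hxy
      · rw [if_neg (not_lt.mpr hy1)]
        rcases le_or_gt y B with hy2 | hy2
        · rw [if_pos hy2]
          calc g2 y ≤ g2 A := hg2anti A y hy1
            _ = g1 A := hE1.symm
            _ ≤ g1 x := hg1anti x A hx1.le
        · rw [if_neg (not_le.mpr hy2)]
          calc g3 y ≤ g3 B := hg3anti B y hy2.le
            _ = g2 B := hE2.symm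
            _ ≤ g2 A := hg2anti A B hAB
            _ = g1 A := hE1.symm
            _ ≤ g1 x := hg1anti x A hx1.le
    · have hy1 : ¬ y < A := not_lt.mpr (hx1.trans hxy)
      rw [if_neg (not_lt.mpr hx1), if_neg hy1]
      rcases le_or_gt x B with hx2 | hx2
      · rw [if_pos hx2]
        rcases le_or_gt y B with hy2 | hy2
        · rw [if_pos hy2]; exact hg2anti x y hxy
        · rw [if_neg (not_le.mpr hy2)]
          calc g3 y ≤ g3 B := hg3anti B y hy2.le
            _ = g2 B := hE2.symm
            _ ≤ g2 x := hg2anti x B hx2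
      · have hy2 : ¬ y ≤ B := fun h => absurd (hxy.trans h) (not_le.mpr hx2)
        rw [if_neg (not_le.mpr hx2), if_neg hy2]
        exact hg3anti x y hxy
  -- F is monotone
  set F : ℝ → ℝ := fun x => ρ - p * K - p * Φ x with hF
  have hFmono : ∀ x y, x ≤ y → F x ≤ F y := by
    intro x y hxy
    have := hanti x y hxy
    simp only [hF]; linarith
  -- main argument
  by_contra hcon
  push_neg at hcon
  obtain ⟨⟨a, ha, hFa⟩, ⟨b, hb, hFb⟩⟩ := hcon
  have hFa' : F (q a) < 0 := hFa
  have hFb' : 0 < F (q b) := hFb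
  have hqab : q a < q b := by
    by_contra h
    push_neg at h
    exact absurd (hFmono _ _ h) (not_le.mpr (hFa'.trans hFb'))
  have hqcont : ContinuousOn q (Set.Icc 0 T) := fun t ht =>
    (hq t ht).continuousAt.continuousWithinAt
  rcases lt_trichotomy a b with hab | hab | hab
  · -- a < b : apply helper to -q on [a, b]
    refine qP_aux_helper (fun t => -q t) a b hab ?_ (by simpa using hqab) ?_
    · exact (hqcont.mono (Set.Icc_subset_Icc ha.1 hb.2)).neg
    · intro e he hqe
      have heT : e ∈ Set.Icc (0:ℝ) T := ⟨ha.1.trans he.1, he.2.trans hb.2⟩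
      have hqe' : q e = q a := by simpa [neg_inj] using hqe
      refine ⟨-(F (q e)), ?_, (hq e heT).neg⟩
      rw [hqe']; linarith
  · rw [hab] at hFa'; exact absurd hFb' (not_lt.mpr hFa'.le)
  · -- b < a : apply helper to q on [b, a]
    refine qP_aux_helper q b a hab ?_ hqab ?_
    · exact hqcont.mono (Set.Icc_subset_Icc hb.1 ha.2)
    · intro e he hqe
      have heT : e ∈ Set.Icc (0:ℝ) T := ⟨hb.1.trans he.1, he.2.trans ha.2⟩
      refine ⟨F (q e), ?_, hq e heT⟩
      rw [hqe]; linarith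
end

section
/- Suppose q : [0, T] → ℝ is differentiable, satisfies q′(t) = ρ − pK − p·Φ(q(t)) for all t ∈ [0, T], and q(T) = 0. Define c*(t) = min( c̄, max( c̲, λ^{1/(1−p)}·e^{q(t)/(p−1)} ) ) for t ∈ [0, T]. If c̄ < λ^{1/(1−p)}, then c* is nondecreasing on [0, T]. -/
/-!
`q` solves the autonomous equation `q' = G(q)` with `G y = ρ - pK - pΦ(y)`. Such a solution
cannot rise and later fall: crossing a value `w` upwards forces `G w ≥ 0`, crossing it downwards
forces `G w ≤ 0`, so `G` would vanish on a whole interval of values that `q` still has to traverse.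
Since `q T = 0`, whenever `q s < q t` for `s ≤ t` we get `q s < q t ≤ 0`, and there
`λ^{1/(1-p)} e^{q/(p-1)} ≥ λ^{1/(1-p)} > c̄` gives `c* = c̄`. Otherwise `q t ≤ q s`, and `c*` is
an antitone function of `q`.
-/

open Set Asymptotics

lemma hasDerivAt_projIcc_comp_of_eq_zero {q : ℝ → ℝ} {q' x w₁ w₂ : ℝ} (hw : w₁ ≤ w₂)
    (hq : HasDerivAt q q' x) (hq' : q x ∈ Icc w₁ w₂ → q' = 0) :
    HasDerivAt (fun y ↦ (projIcc w₁ w₂ hw (q y) : ℝ)) 0 x := by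
  rcases lt_or_ge (q x) w₁ with hlt | hge
  · refine (hasDerivAt_const x w₁).congr_of_eventuallyEq ?_
    filter_upwards [hq.continuousAt.eventually (gt_mem_nhds hlt)] with y hy
    rw [projIcc_of_le_left hw hy.le]
  rcases lt_or_ge w₂ (q x) with hgt | hle
  · refine (hasDerivAt_const x w₂).congr_of_eventuallyEq ?_
    filter_upwards [hq.continuousAt.eventually (lt_mem_nhds hgt)] with y hy
    rw [projIcc_of_right_le hw hy.le]
  obtain rfl := hq' ⟨hge, hle⟩
  rw [hasDerivAt_iff_isLittleO] at hq ⊢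
  refine (isBigO_of_le _ fun y ↦ ?_).trans_isLittleO hq
  simpa only [smul_zero, sub_zero, Real.norm_eq_abs] using abs_projIcc_sub_projIcc hw

variable {G q : ℝ → ℝ} {a b w : ℝ}

lemma nonneg_of_autonomous_of_le_of_lt (hab : a ≤ b)
    (hq : ∀ x ∈ Icc a b, HasDerivAt q (G (q x)) x) (ha : q a ≤ w) (hb : w < q b) :
    0 ≤ G w := by
  by_contra! hGw
  have := image_le_of_deriv_right_lt_deriv_boundary'
    (fun x hx ↦ (hq x hx).continuousAt.continuousWithinAt)
    (fun x hx ↦ (hq x (Ico_subset_Icc_self hx)).hasDerivWithinAt)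
    (B := fun _ ↦ w) (B' := fun _ ↦ 0) ha continuousOn_const
    (fun _ _ ↦ hasDerivWithinAt_const _ _ _)
    (fun x _ hx ↦ hx ▸ hGw) ⟨hab, le_rfl⟩
  exact hb.not_ge this

lemma nonpos_of_autonomous_of_le_of_lt (hab : a ≤ b)
    (hq : ∀ x ∈ Icc a b, HasDerivAt q (G (q x)) x) (ha : w ≤ q a) (hb : q b < w) :
    G w ≤ 0 := by
  by_contra! hGw
  have := image_le_of_deriv_right_lt_deriv_boundary' (f := fun _ ↦ w) (f' := fun _ ↦ 0)
    continuousOn_const (fun _ _ ↦ hasDerivWithinAt_const _ _ _) ha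
    (fun x hx ↦ (hq x hx).continuousAt.continuousWithinAt)
    (fun x hx ↦ (hq x (Ico_subset_Icc_self hx)).hasDerivWithinAt)
    (fun x _ hx ↦ hx ▸ hGw) ⟨hab, le_rfl⟩
  exact hb.not_ge this

lemma le_of_autonomous_of_lt {s t : ℝ} (hst : s ≤ t) (htb : t ≤ b)
    (hq : ∀ x ∈ Icc s b, HasDerivAt q (G (q x)) x) (hlt : q s < q t) : q t ≤ q b := by
  by_contra! hbt
  have hl : max (q s) (q b) < q t := max_lt hlt hbt
  have hG : ∀ w ∈ Ioo (max (q s) (q b)) (q t), G w = 0 := fun w hw ↦ le_antisymm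
    (nonpos_of_autonomous_of_le_of_lt htb (fun x hx ↦ hq x ⟨hst.trans hx.1, hx.2⟩) hw.2.le
      ((le_max_right _ _).trans_lt hw.1))
    (nonneg_of_autonomous_of_le_of_lt hst (fun x hx ↦ hq x ⟨hx.1, hx.2.trans htb⟩)
      ((le_max_left _ _).trans hw.1.le) hw.2)
  obtain ⟨w₁, hlw₁, hw₁t⟩ := exists_between hl
  obtain ⟨w₂, hw₁₂, hw₂t⟩ := exists_between hw₁t
  -- Clamped to `[w₁, w₂]`, where `G` vanishes, `q` becomes constant, yet it runs from `w₂` to `w₁`.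
  have hclamp : ∀ x ∈ Icc t b, HasDerivAt (fun y ↦ (projIcc w₁ w₂ hw₁₂.le (q y) : ℝ)) 0 x :=
    fun x hx ↦ hasDerivAt_projIcc_comp_of_eq_zero hw₁₂.le (hq x ⟨hst.trans hx.1, hx.2⟩)
      fun hqx ↦ hG _ ⟨hlw₁.trans_le hqx.1, hqx.2.trans_lt hw₂t⟩
  have := constant_of_has_deriv_right_zero
    (fun x hx ↦ (hclamp x hx).continuousAt.continuousWithinAt)
    (fun x hx ↦ (hclamp x (Ico_subset_Icc_self hx)).hasDerivWithinAt) b ⟨htb, le_rfl⟩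
  rw [projIcc_of_le_left _ ((le_max_right (q s) (q b)).trans hlw₁.le),
    projIcc_of_right_le _ hw₂t.le] at this
  exact hw₁₂.ne this

lemma antitone_min_max_mul_exp_div {A lo hi p : ℝ} (hA : 0 ≤ A) (hp : p < 1) :
    Antitone fun x ↦ min hi (max lo (A * Real.exp (x / (p - 1)))) := fun x y hxy ↦ by
  have : y / (p - 1) ≤ x / (p - 1) := div_le_div_of_nonpos_of_le (by linarith) hxy
  dsimp only
  gcongr

lemma min_max_mul_exp_div_eq_left {A lo hi p x : ℝ} (hA : 0 ≤ A) (hhi : hi ≤ A) (hp : p < 1)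
    (hx : x ≤ 0) : min hi (max lo (A * Real.exp (x / (p - 1)))) = hi := by
  have : 1 ≤ Real.exp (x / (p - 1)) := Real.one_le_exp (div_nonneg_of_nonpos hx (by linarith))
  exact min_eq_left (le_max_of_le_right (le_mul_of_one_le_right hA this |>.trans' hhi))

theorem power_consumption_nondecreasing_general
    (T ρ K lam clo chi p : ℝ)
    (hlam : 0 < lam)
    (hp1 : p < 1)
    (Φ : ℝ → ℝ)
    (q : ℝ → ℝ)
    (hq : ∀ t ∈ Set.Icc (0 : ℝ) T, HasDerivAt q (ρ - p * K - p * Φ (q t)) t)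
    (hqT : q T = 0)
    (cstar : ℝ → ℝ)
    (hcstar : ∀ t : ℝ,
      cstar t = min chi (max clo (lam ^ (1 / (1 - p)) * Real.exp (q t / (p - 1)))))
    (hcase : chi < lam ^ (1 / (1 - p))) :
    MonotoneOn cstar (Set.Icc 0 T) := by
  intro s hs t ht hst
  have hA : 0 ≤ lam ^ (1 / (1 - p)) := Real.rpow_nonneg hlam.le _
  rw [hcstar, hcstar]
  rcases le_or_gt (q t) (q s) with hts | hst'
  · exact antitone_min_max_mul_exp_div hA hp1 hts
  · have hqt : q t ≤ 0 := hqT ▸ le_of_autonomous_of_lt (G := fun y ↦ ρ - p * K - p * Φ y) hst ht.2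
      (fun x hx ↦ hq x ⟨hs.1.trans hx.1, hx.2⟩) hst'
    rw [min_max_mul_exp_div_eq_left hA hcase.le hp1 (hst'.trans_le hqt).le,
      min_max_mul_exp_div_eq_left hA hcase.le hp1 hqt]

/-- If `c̄ < λ^{1/(1-p)}`, the optimal consumption `c*` is nondecreasing on `[0, T]`. -/
theorem power_consumption_nondecreasing
    (T ρ K lam clo chi p : ℝ) (hT : 0 < T) (hρ : 0 ≤ ρ)
    (hlam : 0 < lam) (hclo : 0 < clo) (hc : clo < chi)
    (hp1 : p < 1) (hp0 : p ≠ 0)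
    (Φ : ℝ → ℝ)
    (hΦ : ∀ x : ℝ, Φ x =
      if x < (p - 1) * Real.log chi + Real.log lam then
        lam / p * chi ^ p * Real.exp (-x) - chi
      else if x ≤ (p - 1) * Real.log clo + Real.log lam then
        (1 - p) / p * lam ^ (1 / (1 - p)) * Real.exp (x / (p - 1))
      else
        lam / p * clo ^ p * Real.exp (-x) - clo)
    (q : ℝ → ℝ)
    (hq : ∀ t ∈ Set.Icc (0 : ℝ) T, HasDerivAt q (ρ - p * K - p * Φ (q t)) t)
    (hqT : q T = 0)
    (cstar : ℝ → ℝ)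
    (hcstar : ∀ t : ℝ,
      cstar t = min chi (max clo (lam ^ (1 / (1 - p)) * Real.exp (q t / (p - 1)))))
    (hcase : chi < lam ^ (1 / (1 - p))) :
    MonotoneOn cstar (Set.Icc 0 T) :=
  power_consumption_nondecreasing_general T ρ K lam clo chi p hlam hp1 Φ q hq hqT cstar hcstar hcase
end

section
/- Suppose q : [0, T] → ℝ is differentiable, satisfies q′(t) = ρ − pK − p·Φ(q(t)) for all t ∈ [0, T], and q(T) = 0. Define c*(t) = min( c̄, max( c̲, λ^{1/(1−p)}·e^{q(t)/(p−1)} ) ) for t ∈ [0, T]. If λ^{1/(1−p)} < c̲, then c* is nonincreasing on [0, T]. -/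
/-!
Each branch of `p Φ` is nonincreasing and the branches agree at the kinks, so `q' = F(q)` is an
autonomous equation with nondecreasing right-hand side `F`. Along such a solution `F(q)` cannot
change sign: once `F(q(a)) > 0`, `q` never drops below `q(a)`, so `F(q)` stays positive (and
symmetrically for negative values). Hence `q` is monotone. If `q` is nondecreasing, `c*` is
nonincreasing because `p < 1`. If `q` is nonincreasing, then `q ≥ q(T) = 0`, so the unconstrained
consumption `λ^{1/(1-p)} e^{q/(p-1)}` stays below `λ^{1/(1-p)} < c̲` and `c*` is constantly `c̲`.
-/

open Set Real

/-- The state `x` at which the unconstrained optimal consumption `λ^{1/(1-p)} e^{x/(p-1)}`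
equals `c`. -/
noncomputable def kink (lam p c : ℝ) : ℝ := (p - 1) * log c + log lam

/-- `Φ(x) = max_{c ∈ [c̲, c̄]} ((λ/p) c^p e^{-x} - c)`, the maximum being attained at the
unconstrained optimal consumption clamped to `[c̲, c̄]`. -/
noncomputable def optimalHamiltonian (lam clo chi p x : ℝ) : ℝ :=
  if x < kink lam p chi then lam / p * chi ^ p * exp (-x) - chi
  else if x ≤ kink lam p clo then (1 - p) / p * lam ^ (1 / (1 - p)) * exp (x / (p - 1))
  else lam / p * clo ^ p * exp (-x) - clo

section Hamiltonian

variable {lam p : ℝ}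

lemma rpow_mul_exp_kink_div (hlam : 0 < lam) (hp : p ≠ 1) {c : ℝ} (hc : 0 < c) :
    lam ^ (1 / (1 - p)) * exp (kink lam p c / (p - 1)) = c := by
  have hp' : p - 1 ≠ 0 := sub_ne_zero.2 hp
  rw [rpow_def_of_pos hlam, ← exp_add, kink,
    show log lam * (1 / (1 - p)) + ((p - 1) * log c + log lam) / (p - 1) = log c by
      field_simp; ring, exp_log hc]

lemma mul_rpow_mul_exp_neg_kink (hlam : 0 < lam) {c : ℝ} (hc : 0 < c) :
    lam * c ^ p * exp (-kink lam p c) = c := by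
  rw [rpow_def_of_pos hc, ← exp_log hlam, ← exp_add, ← exp_add, exp_log hlam, kink,
    show log lam + log c * p + -((p - 1) * log c + log lam) = log c by ring, exp_log hc]

lemma kink_mono (hp : p < 1) {c c' : ℝ} (hc : 0 < c) (hcc' : c ≤ c') :
    kink lam p c' ≤ kink lam p c := by
  unfold kink
  nlinarith [log_le_log hc hcc']

lemma antitone_exp_div {d : ℝ} (hd : d < 0) : Antitone fun x => exp (x / d) :=
  fun _ _ h => exp_le_exp.2 (div_le_div_of_nonpos_of_le hd.le h)

lemma antitone_mul_rpow_mul_exp_neg_sub (hlam : 0 < lam) {c : ℝ} (hc : 0 < c) :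
    Antitone fun x => lam * c ^ p * exp (-x) - p * c := fun _ _ h =>
  sub_le_sub_right (mul_le_mul_of_nonneg_left (exp_le_exp.2 (neg_le_neg h))
    (mul_pos hlam (rpow_pos_of_pos hc p)).le) _

lemma antitone_mul_optimalHamiltonian {clo chi : ℝ} (hlam : 0 < lam) (hclo : 0 < clo)
    (hc : clo ≤ chi) (hp1 : p < 1) (hp0 : p ≠ 0) :
    Antitone fun x => p * optimalHamiltonian lam clo chi p x := by
  have hchi : 0 < chi := hclo.trans_le hc
  have hkink : kink lam p chi ≤ kink lam p clo := kink_mono hp1 hclo hc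
  have outer_eq (c x : ℝ) :
      p * (lam / p * c ^ p * exp (-x) - c) = lam * c ^ p * exp (-x) - p * c := by
    field_simp
  have inner_eq (x : ℝ) : p * ((1 - p) / p * lam ^ (1 / (1 - p)) * exp (x / (p - 1))) =
      (1 - p) * lam ^ (1 / (1 - p)) * exp (x / (p - 1)) := by
    field_simp
  have inner_eq_outer_at_kink {c : ℝ} (hc : 0 < c) :
      (1 - p) * lam ^ (1 / (1 - p)) * exp (kink lam p c / (p - 1)) =
        lam * c ^ p * exp (-kink lam p c) - p * c := by
    rw [mul_assoc, rpow_mul_exp_kink_div hlam hp1.ne hc, mul_rpow_mul_exp_neg_kink hlam hc]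
    ring
  have h_left : EqOn (fun x => lam * chi ^ p * exp (-x) - p * chi)
      (fun x => p * optimalHamiltonian lam clo chi p x) (Iic (kink lam p chi)) := by
    intro x hx
    dsimp only
    rcases hx.out.lt_or_eq with h | rfl
    · rw [optimalHamiltonian, if_pos h, outer_eq]
    · rw [optimalHamiltonian, if_neg (lt_irrefl _), if_pos hkink, inner_eq,
        inner_eq_outer_at_kink hchi]
  have h_mid : EqOn (fun x => (1 - p) * lam ^ (1 / (1 - p)) * exp (x / (p - 1)))
      (fun x => p * optimalHamiltonian lam clo chi p x)
      (Icc (kink lam p chi) (kink lam p clo)) := by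
    intro x hx
    dsimp only
    rw [optimalHamiltonian, if_neg (not_lt.2 hx.1), if_pos hx.2, inner_eq]
  have h_right : EqOn (fun x => lam * clo ^ p * exp (-x) - p * clo)
      (fun x => p * optimalHamiltonian lam clo chi p x) (Ici (kink lam p clo)) := by
    intro x hx
    dsimp only
    rcases hx.out.lt_or_eq with h | rfl
    · rw [optimalHamiltonian, if_neg (not_lt.2 (hkink.trans h.le)), if_neg (not_le.2 h),
        outer_eq]
    · rw [optimalHamiltonian, if_neg (not_lt.2 hkink), if_pos le_rfl, inner_eq,
        inner_eq_outer_at_kink hclo]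
  have h_inner : Antitone fun x => (1 - p) * lam ^ (1 / (1 - p)) * exp (x / (p - 1)) :=
    (antitone_exp_div (by linarith)).const_mul
      (mul_pos (by linarith) (rpow_pos_of_pos hlam _)).le
  refine AntitoneOn.Iic_union_Ici
    (((antitone_mul_rpow_mul_exp_neg_sub hlam hchi).antitoneOn _).congr h_left) ?_
  rw [← Icc_union_Ici_eq_Ici hkink]
  exact (h_inner.antitoneOn _).congr h_mid |>.union_right
    (((antitone_mul_rpow_mul_exp_neg_sub hlam hclo).antitoneOn _).congr h_right)
    (isGreatest_Icc hkink) isLeast_Ici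

end Hamiltonian

section AutonomousODE

variable {F q : ℝ → ℝ} {a b : ℝ}

lemma le_of_hasDerivAt_comp_of_pos (hq : ∀ t ∈ Icc a b, HasDerivAt q (F (q t)) t)
    (ha : 0 < F (q a)) : ∀ t ∈ Icc a b, q a ≤ q t :=
  image_le_of_deriv_right_lt_deriv_boundary' continuousOn_const
    (fun _ _ => hasDerivWithinAt_const _ _ _) le_rfl
    (fun t ht => (hq t ht).continuousAt.continuousWithinAt)
    (fun t ht => (hq t (Ico_subset_Icc_self ht)).hasDerivWithinAt)
    (fun _ _ hqt => hqt ▸ ha)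

lemma ge_of_hasDerivAt_comp_of_neg (hq : ∀ t ∈ Icc a b, HasDerivAt q (F (q t)) t)
    (ha : F (q a) < 0) : ∀ t ∈ Icc a b, q t ≤ q a :=
  image_le_of_deriv_right_lt_deriv_boundary'
    (fun t ht => (hq t ht).continuousAt.continuousWithinAt)
    (fun t ht => (hq t (Ico_subset_Icc_self ht)).hasDerivWithinAt) le_rfl continuousOn_const
    (fun _ _ => hasDerivWithinAt_const _ _ _) (fun _ _ hqt => hqt ▸ ha)

lemma monotoneOn_or_antitoneOn_of_hasDerivAt_comp (hF : Monotone F)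
    (hq : ∀ t ∈ Icc a b, HasDerivAt q (F (q t)) t) :
    MonotoneOn q (Icc a b) ∨ AntitoneOn q (Icc a b) := by
  have hq' : ∀ t ∈ interior (Icc a b), HasDerivWithinAt q (F (q t)) (interior (Icc a b)) t :=
    fun t ht => (hq t (interior_subset ht)).hasDerivWithinAt
  have hcont : ContinuousOn q (Icc a b) := fun t ht => (hq t ht).continuousAt.continuousWithinAt
  by_cases hneg : ∀ t ∈ Icc a b, F (q t) ≤ 0
  · exact .inr <| antitoneOn_of_hasDerivWithinAt_nonpos (convex_Icc a b) hcont hq'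
      fun t ht => hneg t (interior_subset ht)
  push Not at hneg
  obtain ⟨s, hs, hFs⟩ := hneg
  refine .inl <| monotoneOn_of_hasDerivWithinAt_nonneg (convex_Icc a b) hcont hq'
    fun t ht => ?_
  have ht := interior_subset ht
  by_contra! hFt
  rcases le_total s t with hst | hts
  · have hqst := le_of_hasDerivAt_comp_of_pos
      (fun u hu => hq u ⟨hs.1.trans hu.1, hu.2.trans ht.2⟩) hFs t ⟨hst, le_rfl⟩
    exact hFt.not_ge (hFs.le.trans (hF hqst))
  · have hqts := ge_of_hasDerivAt_comp_of_neg
      (fun u hu => hq u ⟨ht.1.trans hu.1, hu.2.trans hs.2⟩) hFt s ⟨hts, le_rfl⟩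
    exact hFs.not_ge ((hF hqts).trans hFt.le)

end AutonomousODE

theorem power_consumption_nonincreasing_general
    (T ρ K lam clo chi p : ℝ)
    (hlam : 0 < lam) (hclo : 0 < clo) (hc : clo < chi)
    (hp1 : p < 1) (hp0 : p ≠ 0)
    (Φ : ℝ → ℝ)
    (hΦ : ∀ x : ℝ, Φ x =
      if x < (p - 1) * Real.log chi + Real.log lam then
        lam / p * chi ^ p * Real.exp (-x) - chi
      else if x ≤ (p - 1) * Real.log clo + Real.log lam then
        (1 - p) / p * lam ^ (1 / (1 - p)) * Real.exp (x / (p - 1))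
      else
        lam / p * clo ^ p * Real.exp (-x) - clo)
    (q : ℝ → ℝ)
    (hq : ∀ t ∈ Set.Icc (0 : ℝ) T, HasDerivAt q (ρ - p * K - p * Φ (q t)) t)
    (hqT : q T = 0)
    (cstar : ℝ → ℝ)
    (hcstar : ∀ t : ℝ,
      cstar t = min chi (max clo (lam ^ (1 / (1 - p)) * Real.exp (q t / (p - 1)))))
    (hcase : lam ^ (1 / (1 - p)) < clo) :
    AntitoneOn cstar (Set.Icc 0 T) := by
  obtain rfl : Φ = optimalHamiltonian lam clo chi p := funext hΦ
  have hF : Monotone fun x => ρ - p * K - p * optimalHamiltonian lam clo chi p x :=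
    fun _ _ h => sub_le_sub_left (antitone_mul_optimalHamiltonian hlam hclo hc.le hp1 hp0 h) _
  have hfree : Antitone fun y => lam ^ (1 / (1 - p)) * exp (y / (p - 1)) :=
    (antitone_exp_div (by linarith)).const_mul (rpow_pos_of_pos hlam _).le
  rcases monotoneOn_or_antitoneOn_of_hasDerivAt_comp hF hq with hmono | hanti
  · exact ((antitone_const.min (antitone_const.max hfree)).comp_monotoneOn hmono).congr
      fun t _ => (hcstar t).symm
  · have hconst : ∀ t ∈ Icc 0 T, cstar t = clo := by
      intro t ht
      have hq0 : 0 ≤ q t := hqT ▸ hanti ht ⟨ht.1.trans ht.2, le_rfl⟩ ht.2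
      have hfree_le : lam ^ (1 / (1 - p)) * exp (q t / (p - 1)) ≤ clo :=
        (hfree hq0).trans (by simpa using hcase.le)
      rw [hcstar, max_eq_left hfree_le, min_eq_right hc.le]
    intro x hx y hy _
    rw [hconst x hx, hconst y hy]

/-- If `λ^{1/(1-p)} < c̲`, the optimal consumption `c*` is nonincreasing on `[0, T]`. -/
theorem power_consumption_nonincreasing
    (T ρ K lam clo chi p : ℝ) (hT : 0 < T) (hρ : 0 ≤ ρ)
    (hlam : 0 < lam) (hclo : 0 < clo) (hc : clo < chi)
    (hp1 : p < 1) (hp0 : p ≠ 0)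
    (Φ : ℝ → ℝ)
    (hΦ : ∀ x : ℝ, Φ x =
      if x < (p - 1) * Real.log chi + Real.log lam then
        lam / p * chi ^ p * Real.exp (-x) - chi
      else if x ≤ (p - 1) * Real.log clo + Real.log lam then
        (1 - p) / p * lam ^ (1 / (1 - p)) * Real.exp (x / (p - 1))
      else
        lam / p * clo ^ p * Real.exp (-x) - clo)
    (q : ℝ → ℝ)
    (hq : ∀ t ∈ Set.Icc (0 : ℝ) T, HasDerivAt q (ρ - p * K - p * Φ (q t)) t)
    (hqT : q T = 0)
    (cstar : ℝ → ℝ)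
    (hcstar : ∀ t : ℝ,
      cstar t = min chi (max clo (lam ^ (1 / (1 - p)) * Real.exp (q t / (p - 1)))))
    (hcase : lam ^ (1 / (1 - p)) < clo) :
    AntitoneOn cstar (Set.Icc 0 T) :=
  power_consumption_nonincreasing_general T ρ K lam clo chi p hlam hclo hc hp1 hp0 Φ hΦ q hq hqT
    cstar hcstar hcase
end
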